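/- arXiv:2602.18113 — 4 statements merged into one kernel-verified Lean document; each statement's English description precedes it below -/
import Mathlib

section
/- (Tracy–Widom-type representation, Theorem 2.4 identity, in conditional form.) Fix α > −1 and an integer m ≥ 1. Let Φ(ξ | s, x) be a complex-valued function of ξ < 0, s ∈ ℝ, x > 0 such that the partial derivatives ∂_ξΦ, ∂ₓΦ, ∂_ξ∂ₓΦ = ∂ₓ∂_ξΦ, ∂ₓ²Φ, and ∂_ξ∂ₓ²Φ = ∂ₓ²∂_ξΦ all exist and are continuous, and such that for every compact X ⊂ (0,∞) there is C > 0 with |Φ(ξ|s,x)| + |∂_ξΦ(ξ|s,x)| + |∂ₓΦ(ξ|s,x)| + |∂_ξ∂ₓΦ(ξ|s,x)| ≤ C·(1 + |ξ|) for all ξ < 0, s ∈ ℝ, x ∈ X. Define p(s,x) := −(4α² − 1)/(8x) + (e^{−iπα}/(2π)) ∫_s^∞ ∫_{−∞}^0 Φ(ξ|u,x)² · ∂_sσ_Φ(ξ|u) dξ du, assume p is differentiable in x, and assume the Schrödinger relation ∂ₓ²Φ(ξ | s, x) = ( ξ + 2·∂ₓp(s,x) )·Φ(ξ | s, x) holds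 for all ξ < 0, s ∈ ℝ, x > 0. Define ℓ(s,x) := −(e^{−iπα}/(2π)) ∫_s^∞ ∫_{−∞}^0 [ Φ(ξ|u,x)·∂ₓ∂_ξΦ(ξ|u,x) − ∂_ξΦ(ξ|u,x)·∂ₓΦ(ξ|u,x) ] · ∂_sσ_Φ(ξ|u) dξ du. Then ℓ is differentiable in x and ∂ₓℓ(s,x) = −p(s,x) − (4α² − 1)/(8x) for all s ∈ ℝ and x > 0. -/
/-!
The `x`-derivative of the Wronskian `W = Φ ∂_ξ∂ₓΦ − ∂_ξΦ ∂ₓΦ` is `Φ ∂_ξ∂ₓ²Φ − ∂_ξΦ ∂ₓ²Φ`.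
Differentiating the Schrödinger relation `∂ₓ²Φ = (ξ + 2∂ₓp) Φ` in `ξ` gives
`∂_ξ∂ₓ²Φ = Φ + (ξ + 2∂ₓp) ∂_ξΦ`, so `∂ₓW = Φ²`. Differentiation under the integral is justified by
the linear growth of `Φ` together with `∂_sσ_Φ(ξ | u) ≤ e^{1 − u + ξ}` for `ξ < 0`, and then
`∂ₓℓ = −(e^{−iπα}/2π) ∫∫ Φ² ∂_sσ_Φ = −p − (4α² − 1)/(8x)`.
-/

open MeasureTheory

/-- The partial derivative in `s` of the symbol
`σ_Φ(ζ | s) = 1/(1 + exp(−s − (−1)^m ζ^m))`. -/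
noncomputable def dsigmaPhi (m : ℕ) (ξ s : ℝ) : ℝ :=
  Real.exp (-s - (-1 : ℝ) ^ m * ξ ^ m) / (1 + Real.exp (-s - (-1 : ℝ) ^ m * ξ ^ m)) ^ 2

open Set Real Filter Topology

lemma dsigmaPhi_nonneg (m : ℕ) (ξ s : ℝ) : 0 ≤ dsigmaPhi m ξ s := by
  unfold dsigmaPhi
  positivity

lemma continuous_dsigmaPhi (m : ℕ) : Continuous (fun q : ℝ × ℝ => dsigmaPhi m q.1 q.2) := by
  unfold dsigmaPhi
  have he : Continuous (fun q : ℝ × ℝ => exp (-q.2 - (-1) ^ m * q.1 ^ m)) := by fun_prop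
  exact he.div ((continuous_const.add he).pow 2) fun q => by positivity

lemma dsigmaPhi_le_exp {m : ℕ} (hm : 1 ≤ m) {ξ : ℝ} (hξ : ξ < 0) (s : ℝ) :
    dsigmaPhi m ξ s ≤ exp (1 - s + ξ) := by
  set A := -s - (-1 : ℝ) ^ m * ξ ^ m
  have hpow : -ξ - 1 ≤ (-ξ) ^ m := by
    rcases le_or_gt (-ξ) 1 with h | h
    · linarith [pow_nonneg (neg_nonneg.2 hξ.le) m]
    · linarith [le_self_pow₀ h.le (by omega : m ≠ 0)]
  have hA : A ≤ 1 - s + ξ := by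
    rw [neg_pow] at hpow
    linarith
  calc dsigmaPhi m ξ s = exp A / (1 + exp A) ^ 2 := rfl
    _ ≤ exp A := div_le_self (exp_pos A).le (by nlinarith [exp_pos A])
    _ ≤ exp (1 - s + ξ) := exp_le_exp.2 hA

lemma one_add_sq_le_exp_half {t : ℝ} (ht : 0 ≤ t) : (1 + t) ^ 2 ≤ 16 * exp (t / 2) :=
  calc (1 + t) ^ 2 ≤ (4 * (t / 4 + 1)) ^ 2 := pow_le_pow_left₀ (by linarith) (by linarith) 2
    _ ≤ (4 * exp (t / 4)) ^ 2 := by gcongr; exact add_one_le_exp _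
    _ = 16 * exp (t / 2) := by rw [mul_pow, sq (exp _), ← exp_add]; ring_nf

lemma norm_sq_mul_dsigmaPhi_le {m : ℕ} (hm : 1 ≤ m) {ξ : ℝ} (hξ : ξ < 0) (s : ℝ) {z : ℂ}
    {C : ℝ} (hz : ‖z‖ ≤ C * (1 + |ξ|)) :
    ‖z ^ 2 * (dsigmaPhi m ξ s : ℂ)‖ ≤ 16 * exp 1 * C ^ 2 * (exp (-s) * exp (ξ / 2)) := by
  rw [abs_of_neg hξ] at hz
  rw [norm_mul, norm_pow, Complex.norm_real, norm_of_nonneg (dsigmaPhi_nonneg m ξ s)]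
  have hexp : exp (-ξ / 2) * exp (1 - s + ξ) = exp 1 * (exp (-s) * exp (ξ / 2)) := by
    simp only [← exp_add]
    ring_nf
  calc ‖z‖ ^ 2 * dsigmaPhi m ξ s ≤ (C * (1 + -ξ)) ^ 2 * exp (1 - s + ξ) :=
        mul_le_mul (pow_le_pow_left₀ (norm_nonneg _) hz 2) (dsigmaPhi_le_exp hm hξ s)
          (dsigmaPhi_nonneg m ξ s) (by positivity)
    _ ≤ C ^ 2 * (16 * exp (-ξ / 2)) * exp (1 - s + ξ) := by
        rw [mul_pow]
        gcongr
        exact one_add_sq_le_exp_half (by linarith)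
    _ = 16 * exp 1 * C ^ 2 * (exp (-s) * exp (ξ / 2)) := by
        linear_combination 16 * C ^ 2 * hexp

lemma integrableOn_exp_neg_mul_exp_half (s : ℝ) :
    IntegrableOn (fun q : ℝ × ℝ => exp (-q.1) * exp (q.2 / 2)) (Ioi s ×ˢ Iio 0) := by
  have h₁ : IntegrableOn (fun u : ℝ => exp (-u)) (Ioi s) := by
    simpa using exp_neg_integrableOn_Ioi s one_pos
  have h₂ : IntegrableOn (fun ξ : ℝ => exp (ξ / 2)) (Iio 0) := by
    simpa [div_eq_inv_mul] using
      (integrableOn_exp_mul_Iic (a := 1 / 2) (by norm_num) 0).mono_set Iio_subset_Iic_self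
  rw [IntegrableOn, Measure.volume_eq_prod, ← Measure.prod_restrict]
  exact h₁.mul_prod h₂

lemma continuousOn_slice {G : ℝ → ℝ → ℝ → ℂ}
    (hG : ContinuousOn (fun p : ℝ × ℝ × ℝ => G p.1 p.2.1 p.2.2) {p | p.1 < 0 ∧ 0 < p.2.2})
    {y : ℝ} (hy : 0 < y) : ContinuousOn (fun q : ℝ × ℝ => G q.2 q.1 y) {q | q.2 < 0} :=
  hG.comp (continuous_snd.prodMk (continuous_fst.prodMk continuous_const)).continuousOn
    fun _ hq => ⟨hq, hy⟩

lemma deriv_eq_of_schrodinger {g gxx : ℝ → ℂ} {g' gxx' E : ℂ} {ξ : ℝ}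
    (hg : HasDerivAt g g' ξ) (hgxx : HasDerivAt gxx gxx' ξ)
    (hschr : gxx =ᶠ[𝓝 ξ] fun ξ' => (ξ' + E) * g ξ') :
    gxx' = g ξ + (ξ + E) * g' := by
  have h := (((hasDerivAt_id ξ).ofReal_comp).add_const E).mul hg
  simp only [id, Complex.ofReal_one, one_mul] at h
  exact hgxx.unique (h.congr_of_eventuallyEq hschr)

lemma hasDerivAt_wronskian_of_schrodinger {g gξ gx gξx : ℝ → ℂ} {gxx gξxx E : ℂ} {y : ℝ}
    (hg : HasDerivAt g (gx y) y) (hgξ : HasDerivAt gξ (gξx y) y)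
    (hgx : HasDerivAt gx gxx y) (hgξx : HasDerivAt gξx gξxx y)
    (hgxx : gxx = E * g y) (hgξxx : gξxx = g y + E * gξ y) :
    HasDerivAt (fun y' => g y' * gξx y' - gξ y' * gx y') (g y ^ 2) y := by
  refine ((hg.mul hgξx).sub (hgξ.mul hgx)).congr_deriv ?_
  rw [hgxx, hgξxx]
  ring

lemma hasDerivAt_setIntegral_mul_dsigmaPhi {m : ℕ} (hm : 1 ≤ m) {W Φ : ℝ → ℝ → ℝ → ℂ}
    {s x r C : ℝ} (hr : 0 < r)
    (hW_cont : ∀ y ∈ Metric.ball x r, ContinuousOn (fun q : ℝ × ℝ => W q.2 q.1 y) {q | q.2 < 0})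
    (hW_int : IntegrableOn (fun q : ℝ × ℝ => W q.2 q.1 x * (dsigmaPhi m q.2 q.1 : ℂ))
      (Ioi s ×ˢ Iio 0))
    (hΦ_cont : ContinuousOn (fun q : ℝ × ℝ => Φ q.2 q.1 x) {q | q.2 < 0})
    (hΦ_bound : ∀ ξ < 0, ∀ u, ∀ y ∈ Metric.ball x r, ‖Φ ξ u y‖ ≤ C * (1 + |ξ|))
    (hW_deriv : ∀ ξ < 0, ∀ u, ∀ y ∈ Metric.ball x r, HasDerivAt (W ξ u) (Φ ξ u y ^ 2) y) :
    HasDerivAt (fun y => ∫ q in Ioi s ×ˢ Iio 0, W q.2 q.1 y * (dsigmaPhi m q.2 q.1 : ℂ))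
      (∫ q in Ioi s ×ˢ Iio 0, Φ q.2 q.1 x ^ 2 * (dsigmaPhi m q.2 q.1 : ℂ)) x := by
  have hS : MeasurableSet (Ioi s ×ˢ Iio (0 : ℝ)) := measurableSet_Ioi.prod measurableSet_Iio
  have hσ : ContinuousOn (fun q : ℝ × ℝ => (dsigmaPhi m q.2 q.1 : ℂ)) {q | q.2 < 0} :=
    (Complex.continuous_ofReal.comp ((continuous_dsigmaPhi m).comp continuous_swap)).continuousOn
  have hball := Metric.ball_mem_nhds x hr
  refine (hasDerivAt_integral_of_dominated_loc_of_deriv_le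
    (F' := fun y q => Φ q.2 q.1 y ^ 2 * (dsigmaPhi m q.2 q.1 : ℂ)) hball
    (eventually_of_mem hball fun y hy =>
      (((hW_cont y hy).mul hσ).mono fun _ hq => hq.2).aestronglyMeasurable hS)
    hW_int ((((hΦ_cont.pow 2).mul hσ).mono fun _ hq => hq.2).aestronglyMeasurable hS)
    (bound := fun q => 16 * exp 1 * C ^ 2 * (exp (-q.1) * exp (q.2 / 2))) ?_
    ((integrableOn_exp_neg_mul_exp_half s).const_mul _) ?_).2
  · filter_upwards [ae_restrict_mem hS] with q hq y hy
    exact norm_sq_mul_dsigmaPhi_le hm hq.2 q.1 (hΦ_bound q.2 hq.2 q.1 y hy)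
  · filter_upwards [ae_restrict_mem hS] with q hq y hy
    exact (hW_deriv q.2 hq.2 q.1 y hy).mul_const _

theorem statement2_general (α : ℝ) (m : ℕ) (hm : 1 ≤ m)
    (Φ Φξ Φx Φξx Φxx Φξxx : ℝ → ℝ → ℝ → ℂ)
    -- continuity of Φ and of all the listed partial derivatives
    (hcΦ : ContinuousOn (fun p : ℝ × ℝ × ℝ => Φ p.1 p.2.1 p.2.2)
      {p : ℝ × ℝ × ℝ | p.1 < 0 ∧ 0 < p.2.2})
    (hcΦξ : ContinuousOn (fun p : ℝ × ℝ × ℝ => Φξ p.1 p.2.1 p.2.2)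
      {p : ℝ × ℝ × ℝ | p.1 < 0 ∧ 0 < p.2.2})
    (hcΦx : ContinuousOn (fun p : ℝ × ℝ × ℝ => Φx p.1 p.2.1 p.2.2)
      {p : ℝ × ℝ × ℝ | p.1 < 0 ∧ 0 < p.2.2})
    (hcΦξx : ContinuousOn (fun p : ℝ × ℝ × ℝ => Φξx p.1 p.2.1 p.2.2)
      {p : ℝ × ℝ × ℝ | p.1 < 0 ∧ 0 < p.2.2})
    -- the partial derivatives exist, and the mixed ones coincide
    (hd : ∀ ξ : ℝ, ξ < 0 → ∀ s x : ℝ, 0 < x →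
      HasDerivAt (fun ξ' => Φ ξ' s x) (Φξ ξ s x) ξ ∧
      HasDerivAt (fun y => Φ ξ s y) (Φx ξ s x) x ∧
      HasDerivAt (fun ξ' => Φx ξ' s x) (Φξx ξ s x) ξ ∧
      HasDerivAt (fun y => Φξ ξ s y) (Φξx ξ s x) x ∧
      HasDerivAt (fun y => Φx ξ s y) (Φxx ξ s x) x ∧
      HasDerivAt (fun ξ' => Φxx ξ' s x) (Φξxx ξ s x) ξ ∧
      HasDerivAt (fun y => Φξx ξ s y) (Φξxx ξ s x) x)
    -- growth bound, uniform for x in compact subsets of (0,∞)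
    (hgrowth : ∀ X : Set ℝ, IsCompact X → X ⊆ Set.Ioi 0 → ∃ C : ℝ, 0 < C ∧
      ∀ ξ : ℝ, ξ < 0 → ∀ s : ℝ, ∀ x ∈ X,
        ‖Φ ξ s x‖ + ‖Φξ ξ s x‖ + ‖Φx ξ s x‖ +
          ‖Φξx ξ s x‖ ≤ C * (1 + |ξ|))
    -- the double integrals defining p and ℓ converge
    (hintl : ∀ s x : ℝ, 0 < x →
      IntegrableOn (fun q : ℝ × ℝ =>
          (Φ q.2 q.1 x * Φξx q.2 q.1 x - Φξ q.2 q.1 x * Φx q.2 q.1 x) *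
            ((dsigmaPhi m q.2 q.1 : ℝ) : ℂ))
        (Set.Ioi s ×ˢ Set.Iio (0 : ℝ)))
    -- definition of p, differentiability of p in x, and the Schrödinger relation
    (p px : ℝ → ℝ → ℂ)
    (hp : ∀ s x : ℝ, 0 < x → p s x =
      -(((4 * α ^ 2 - 1) / (8 * x) : ℝ) : ℂ) +
        Complex.exp (-((Real.pi * α : ℝ) : ℂ) * Complex.I) / (2 * ((Real.pi : ℝ) : ℂ)) *
          ∫ q in Set.Ioi s ×ˢ Set.Iio (0 : ℝ),
            Φ q.2 q.1 x ^ 2 * ((dsigmaPhi m q.2 q.1 : ℝ) : ℂ))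
    (hschr : ∀ ξ : ℝ, ξ < 0 → ∀ s x : ℝ, 0 < x →
      Φxx ξ s x = ((ξ : ℂ) + 2 * px s x) * Φ ξ s x) :
    -- conclusion: ℓ is differentiable in x with ∂ₓℓ = −p − (4α²−1)/(8x)
    ∀ s x : ℝ, 0 < x →
      HasDerivAt (fun y =>
          -(Complex.exp (-((Real.pi * α : ℝ) : ℂ) * Complex.I) / (2 * ((Real.pi : ℝ) : ℂ))) *
            ∫ q in Set.Ioi s ×ˢ Set.Iio (0 : ℝ),
              (Φ q.2 q.1 y * Φξx q.2 q.1 y - Φξ q.2 q.1 y * Φx q.2 q.1 y) *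
                ((dsigmaPhi m q.2 q.1 : ℝ) : ℂ))
        (-(p s x) - (((4 * α ^ 2 - 1) / (8 * x) : ℝ) : ℂ)) x := by
  intro s x hx
  have hpos : ∀ y ∈ Metric.closedBall x (x / 2), 0 < y := fun y hy => by
    rw [Real.closedBall_eq_Icc] at hy
    linarith [hy.1]
  obtain ⟨C, -, hC⟩ := hgrowth _ (isCompact_closedBall x (x / 2)) hpos
  have hball : ∀ y ∈ Metric.ball x (x / 2), 0 < y ∧ y ∈ Metric.closedBall x (x / 2) :=
    fun y hy => ⟨hpos y (Metric.ball_subset_closedBall hy), Metric.ball_subset_closedBall hy⟩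
  have hbound : ∀ ξ < 0, ∀ u, ∀ y ∈ Metric.ball x (x / 2), ‖Φ ξ u y‖ ≤ C * (1 + |ξ|) := by
    intro ξ hξ u y hy
    refine (hC ξ hξ u y (hball y hy).2).trans' ?_
    simp only [add_assoc]
    exact le_add_of_nonneg_right (by positivity)
  have hwronskian : ∀ ξ < 0, ∀ u, ∀ y ∈ Metric.ball x (x / 2),
      HasDerivAt (fun y' => Φ ξ u y' * Φξx ξ u y' - Φξ ξ u y' * Φx ξ u y') (Φ ξ u y ^ 2) y := by
    intro ξ hξ u y hy
    obtain ⟨hΦ_ξ, hΦ_x, -, hΦξ_x, hΦx_x, hΦxx_ξ, hΦξx_x⟩ := hd ξ hξ u y (hball y hy).1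
    have hschr_near : ∀ᶠ ξ' in 𝓝 ξ, Φxx ξ' u y = (ξ' + 2 * px u y) * Φ ξ' u y :=
      (eventually_lt_nhds hξ).mono fun ξ' hξ' => hschr ξ' hξ' u y (hball y hy).1
    exact hasDerivAt_wronskian_of_schrodinger hΦ_x hΦξ_x hΦx_x hΦξx_x
      (hschr ξ hξ u y (hball y hy).1) (deriv_eq_of_schrodinger hΦ_ξ hΦxx_ξ hschr_near)
  have hcont : ∀ y ∈ Metric.ball x (x / 2), ContinuousOn
      (fun q : ℝ × ℝ => Φ q.2 q.1 y * Φξx q.2 q.1 y - Φξ q.2 q.1 y * Φx q.2 q.1 y) {q | q.2 < 0} :=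
    fun y hy => ((continuousOn_slice hcΦ (hball y hy).1).mul
      (continuousOn_slice hcΦξx (hball y hy).1)).sub ((continuousOn_slice hcΦξ (hball y hy).1).mul
        (continuousOn_slice hcΦx (hball y hy).1))
  refine ((hasDerivAt_setIntegral_mul_dsigmaPhi hm (half_pos hx) hcont (hintl s x hx)
    (continuousOn_slice hcΦ hx) hbound hwronskian).const_mul _).congr_deriv ?_
  rw [hp s x hx]
  ring

/-- Tracy–Widom-type representation (Theorem 2.4, identity part), conditional form:
`∂ₓ log L_α^{(Bes)}(s,x) = −p(s,x) − (4α²−1)/(8x)`. -/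
theorem statement2 (α : ℝ) (hα : -1 < α) (m : ℕ) (hm : 1 ≤ m)
    (Φ Φξ Φx Φξx Φxx Φξxx : ℝ → ℝ → ℝ → ℂ)
    -- continuity of Φ and of all the listed partial derivatives
    (hcΦ : ContinuousOn (fun p : ℝ × ℝ × ℝ => Φ p.1 p.2.1 p.2.2)
      {p : ℝ × ℝ × ℝ | p.1 < 0 ∧ 0 < p.2.2})
    (hcΦξ : ContinuousOn (fun p : ℝ × ℝ × ℝ => Φξ p.1 p.2.1 p.2.2)
      {p : ℝ × ℝ × ℝ | p.1 < 0 ∧ 0 < p.2.2})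
    (hcΦx : ContinuousOn (fun p : ℝ × ℝ × ℝ => Φx p.1 p.2.1 p.2.2)
      {p : ℝ × ℝ × ℝ | p.1 < 0 ∧ 0 < p.2.2})
    (hcΦξx : ContinuousOn (fun p : ℝ × ℝ × ℝ => Φξx p.1 p.2.1 p.2.2)
      {p : ℝ × ℝ × ℝ | p.1 < 0 ∧ 0 < p.2.2})
    (hcΦxx : ContinuousOn (fun p : ℝ × ℝ × ℝ => Φxx p.1 p.2.1 p.2.2)
      {p : ℝ × ℝ × ℝ | p.1 < 0 ∧ 0 < p.2.2})
    (hcΦξxx : ContinuousOn (fun p : ℝ × ℝ × ℝ => Φξxx p.1 p.2.1 p.2.2)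
      {p : ℝ × ℝ × ℝ | p.1 < 0 ∧ 0 < p.2.2})
    -- the partial derivatives exist, and the mixed ones coincide
    (hd : ∀ ξ : ℝ, ξ < 0 → ∀ s x : ℝ, 0 < x →
      HasDerivAt (fun ξ' => Φ ξ' s x) (Φξ ξ s x) ξ ∧
      HasDerivAt (fun y => Φ ξ s y) (Φx ξ s x) x ∧
      HasDerivAt (fun ξ' => Φx ξ' s x) (Φξx ξ s x) ξ ∧
      HasDerivAt (fun y => Φξ ξ s y) (Φξx ξ s x) x ∧
      HasDerivAt (fun y => Φx ξ s y) (Φxx ξ s x) x ∧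
      HasDerivAt (fun ξ' => Φxx ξ' s x) (Φξxx ξ s x) ξ ∧
      HasDerivAt (fun y => Φξx ξ s y) (Φξxx ξ s x) x)
    -- growth bound, uniform for x in compact subsets of (0,∞)
    (hgrowth : ∀ X : Set ℝ, IsCompact X → X ⊆ Set.Ioi 0 → ∃ C : ℝ, 0 < C ∧
      ∀ ξ : ℝ, ξ < 0 → ∀ s : ℝ, ∀ x ∈ X,
        ‖Φ ξ s x‖ + ‖Φξ ξ s x‖ + ‖Φx ξ s x‖ +
          ‖Φξx ξ s x‖ ≤ C * (1 + |ξ|))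
    -- the double integrals defining p and ℓ converge
    (hintp : ∀ s x : ℝ, 0 < x →
      IntegrableOn (fun q : ℝ × ℝ => Φ q.2 q.1 x ^ 2 * ((dsigmaPhi m q.2 q.1 : ℝ) : ℂ))
        (Set.Ioi s ×ˢ Set.Iio (0 : ℝ)))
    (hintl : ∀ s x : ℝ, 0 < x →
      IntegrableOn (fun q : ℝ × ℝ =>
          (Φ q.2 q.1 x * Φξx q.2 q.1 x - Φξ q.2 q.1 x * Φx q.2 q.1 x) *
            ((dsigmaPhi m q.2 q.1 : ℝ) : ℂ))
        (Set.Ioi s ×ˢ Set.Iio (0 : ℝ)))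
    -- definition of p, differentiability of p in x, and the Schrödinger relation
    (p px : ℝ → ℝ → ℂ)
    (hp : ∀ s x : ℝ, 0 < x → p s x =
      -(((4 * α ^ 2 - 1) / (8 * x) : ℝ) : ℂ) +
        Complex.exp (-((Real.pi * α : ℝ) : ℂ) * Complex.I) / (2 * ((Real.pi : ℝ) : ℂ)) *
          ∫ q in Set.Ioi s ×ˢ Set.Iio (0 : ℝ),
            Φ q.2 q.1 x ^ 2 * ((dsigmaPhi m q.2 q.1 : ℝ) : ℂ))
    (hpx : ∀ s x : ℝ, 0 < x → HasDerivAt (fun y => p s y) (px s x) x)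
    (hschr : ∀ ξ : ℝ, ξ < 0 → ∀ s x : ℝ, 0 < x →
      Φxx ξ s x = ((ξ : ℂ) + 2 * px s x) * Φ ξ s x) :
    -- conclusion: ℓ is differentiable in x with ∂ₓℓ = −p − (4α²−1)/(8x)
    ∀ s x : ℝ, 0 < x →
      HasDerivAt (fun y =>
          -(Complex.exp (-((Real.pi * α : ℝ) : ℂ) * Complex.I) / (2 * ((Real.pi : ℝ) : ℂ))) *
            ∫ q in Set.Ioi s ×ˢ Set.Iio (0 : ℝ),
              (Φ q.2 q.1 y * Φξx q.2 q.1 y - Φξ q.2 q.1 y * Φx q.2 q.1 y) *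
                ((dsigmaPhi m q.2 q.1 : ℝ) : ℂ))
        (-(p s x) - (((4 * α ^ 2 - 1) / (8 * x) : ℝ) : ℂ)) x :=
  statement2_general α m hm Φ Φξ Φx Φξx Φxx Φξxx hcΦ hcΦξ hcΦx hcΦξx hd hgrowth hintl p px hp hschr
end

section
/- (Large-s asymptotics of F_β, Proposition B.1(i), asymptotic part.) Let β > −1 and s₀ > 0. Then there is a constant C > 0 such that for all s ≥ s₀: | F_β(s) − Γ(β+1)·e^{−s} | ≤ C·e^{−2s}. -/
/-!
For `0 < y ≤ e^{-s₀} < 1` one has `|log (1 + y) - y| ≤ y² / (1 - e^{-s₀})`. Applied to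
`y = e^{-s-x}` and integrated against `x^β`, the linear term gives
`∫₀^∞ x^β e^{-s-x} dx = Γ(β+1) e^{-s}`, and the quadratic error is at most
`(1 - e^{-s₀})⁻¹ ∫₀^∞ x^β e^{-2s-2x} dx = (1 - e^{-s₀})⁻¹ 2^{-(β+1)} Γ(β+1) e^{-2s}`.
-/

open MeasureTheory

/-- `F_β(s) := ∫₀^∞ x^β log(1 + e^{−s−x}) dx`. -/
noncomputable def Fbeta (β s : ℝ) : ℝ :=
  ∫ x in Set.Ioi (0 : ℝ), x ^ β * Real.log (1 + Real.exp (-s - x))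

open Real Set

lemma abs_log_one_add_sub_self_le {y : ℝ} (hy : |y| < 1) :
    |log (1 + y) - y| ≤ |y| ^ 2 / (1 - |y|) := by
  have h := abs_log_sub_add_sum_range_le (x := -y) (by rwa [abs_neg]) 1
  simp only [Finset.sum_range_one, zero_add, pow_one, Nat.cast_zero, div_one, sub_neg_eq_add,
    abs_neg] at h
  rwa [neg_add_eq_sub] at h

lemma abs_log_one_add_sub_self_le_of_le {y ε : ℝ} (hy : 0 ≤ y) (hyε : y ≤ ε) (hε : ε < 1) :
    |log (1 + y) - y| ≤ y ^ 2 / (1 - ε) := by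
  have hy1 : |y| < 1 := by rw [abs_of_nonneg hy]; linarith
  calc |log (1 + y) - y| ≤ y ^ 2 / (1 - y) := by
        simpa [abs_of_nonneg hy] using abs_log_one_add_sub_self_le hy1
    _ ≤ y ^ 2 / (1 - ε) :=
        div_le_div_of_nonneg_left (sq_nonneg y) (by linarith) (by linarith)

section ShiftedGamma

variable {β a : ℝ}

lemma integrableOn_rpow_mul_exp_neg_mul_add (hβ : -1 < β) (ha : 0 < a) (s : ℝ) :
    IntegrableOn (fun x ↦ x ^ β * exp (-(a * s) - a * x)) (Ioi 0) := by
  refine IntegrableOn.congr_fun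
    ((integrableOn_rpow_mul_exp_neg_mul_rpow hβ one_pos ha).const_mul (exp (-(a * s))))
    (fun x _ ↦ ?_) measurableSet_Ioi
  simp only [rpow_one, sub_eq_add_neg, exp_add, neg_mul]
  ring

lemma integral_rpow_mul_exp_neg_mul_add (hβ : -1 < β) (ha : 0 < a) (s : ℝ) :
    ∫ x in Ioi 0, x ^ β * exp (-(a * s) - a * x)
      = (1 / a) ^ (β + 1) * Gamma (β + 1) * exp (-(a * s)) := by
  have hΓ := integral_rpow_mul_exp_neg_mul_Ioi (a := β + 1) (by linarith) ha
  rw [add_sub_cancel_right] at hΓ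
  have hsplit (x : ℝ) :
      x ^ β * exp (-(a * s) - a * x) = exp (-(a * s)) * (x ^ β * exp (-(a * x))) := by
    rw [sub_eq_add_neg, exp_add, neg_mul_eq_neg_mul]
    ring
  simp_rw [hsplit]
  rw [integral_const_mul, hΓ]
  ring

end ShiftedGamma

lemma integrableOn_rpow_mul_log_one_add_exp {β : ℝ} (hβ : -1 < β) (s : ℝ) :
    IntegrableOn (fun x ↦ x ^ β * log (1 + exp (-s - x))) (Ioi 0) := by
  have hdom : IntegrableOn (fun x ↦ x ^ β * exp (-s - x)) (Ioi 0) := by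
    simpa using integrableOn_rpow_mul_exp_neg_mul_add hβ one_pos s
  refine hdom.mono' (by fun_prop) ((ae_restrict_iff' measurableSet_Ioi).mpr
    (ae_of_all _ fun x (hx : 0 < x) ↦ ?_))
  have hlog : 0 ≤ log (1 + exp (-s - x)) := log_nonneg (by linarith [exp_pos (-s - x)])
  rw [norm_mul, norm_of_nonneg (rpow_nonneg hx.le β), norm_of_nonneg hlog]
  gcongr
  linarith [log_le_sub_one_of_pos (by positivity : 0 < 1 + exp (-s - x))]

lemma abs_rpow_mul_log_one_add_exp_sub_le {β s₀ s x : ℝ} (hs₀ : 0 < s₀) (hs : s₀ ≤ s)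
    (hx : 0 ≤ x) :
    |x ^ β * log (1 + exp (-s - x)) - x ^ β * exp (-s - x)|
      ≤ x ^ β * exp (-(2 * s) - 2 * x) / (1 - exp (-s₀)) := by
  have hy : exp (-s - x) ≤ exp (-s₀) := exp_le_exp.mpr (by linarith)
  have hsq : exp (-s - x) ^ 2 = exp (-(2 * s) - 2 * x) := by
    rw [← exp_nat_mul]
    ring_nf
  rw [← mul_sub, abs_mul, abs_of_nonneg (rpow_nonneg hx β), mul_div_assoc, ← hsq]
  gcongr
  exact abs_log_one_add_sub_self_le_of_le (exp_pos _).le hy (exp_lt_one_iff.mpr (by linarith))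

/-- Large-`s` asymptotics of `F_β` (Proposition B.1(i), asymptotic part). -/
theorem statement6 (β s₀ : ℝ) (hβ : -1 < β) (hs₀ : 0 < s₀) :
    ∃ C : ℝ, 0 < C ∧ ∀ s : ℝ, s₀ ≤ s →
      |Fbeta β s - Real.Gamma (β + 1) * Real.exp (-s)| ≤ C * Real.exp (-2 * s) := by
  have hε : 0 < 1 - exp (-s₀) := sub_pos.mpr (exp_lt_one_iff.mpr (by linarith))
  have hΓ : 0 < Gamma (β + 1) := Gamma_pos_of_pos (by linarith)
  refine ⟨(1 / 2) ^ (β + 1) * Gamma (β + 1) / (1 - exp (-s₀)), by positivity, fun s hs ↦ ?_⟩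
  have hmain : ∫ x in Ioi 0, x ^ β * exp (-s - x) = Gamma (β + 1) * exp (-s) := by
    simpa using integral_rpow_mul_exp_neg_mul_add hβ one_pos s
  have hmain_int : IntegrableOn (fun x ↦ x ^ β * exp (-s - x)) (Ioi 0) := by
    simpa using integrableOn_rpow_mul_exp_neg_mul_add hβ one_pos s
  calc |Fbeta β s - Gamma (β + 1) * exp (-s)|
      = ‖∫ x in Ioi 0, (x ^ β * log (1 + exp (-s - x)) - x ^ β * exp (-s - x))‖ := by
        rw [integral_sub (integrableOn_rpow_mul_log_one_add_exp hβ s) hmain_int, hmain,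
          Real.norm_eq_abs, Fbeta]
    _ ≤ ∫ x in Ioi 0, x ^ β * exp (-(2 * s) - 2 * x) / (1 - exp (-s₀)) :=
        norm_integral_le_of_norm_le
          ((integrableOn_rpow_mul_exp_neg_mul_add hβ two_pos s).div_const _)
          ((ae_restrict_iff' measurableSet_Ioi).mpr (ae_of_all _ fun x (hx : 0 < x) ↦
            abs_rpow_mul_log_one_add_exp_sub_le hs₀ hs hx.le))
    _ = (1 / 2) ^ (β + 1) * Gamma (β + 1) / (1 - exp (-s₀)) * exp (-2 * s) := by
        rw [integral_div, integral_rpow_mul_exp_neg_mul_add hβ two_pos s, neg_mul]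
        ring
end

section
/- (General Laplace-type asymptotics, Proposition B.1(ii), with sharp error order t^{−1/m}.) Let m ≥ 1 be an integer, β > −1, q₀ > 0 and δ > 0. Let q be holomorphic on a complex neighborhood of 0, real-valued and continuous on [0,δ], with q(x) > 0 for all x ∈ (0,δ], and with q(z) = q₀·z^m + O(z^{m+1}) as z → 0. Let f ∈ C¹([0,δ]; ℝ) with f(0) ≠ 0, and for t > 0, s ∈ ℝ set I_t(s) := ∫₀^δ x^β · f(x) · log(1 + e^{−s − t·q(x)}) dx. Then for every s₀ ∈ ℝ there exist C > 0 and T > 0 such that for all t ≥ T and all s ≥ s₀: | I_t(s) − ( f(0)/(m·q₀^{(β+1)/m}) ) · t^{−(β+1)/m} · F_{(β+1)/m − 1}(s) | ≤ C · t^{−(β+2)/m}. -/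
open MeasureTheory

/-!
The substitution `x ↦ (t q₀)^{-1/m} x` turns the model integral
`∫₀^∞ x^β log (1 + e^{-s - t q₀ x^m}) dx` into exactly the main term
`t^{-(β+1)/m} F_{(β+1)/m-1}(s) / (m q₀^{(β+1)/m})`, so it suffices to compare `I_t(s)` with
`f 0` times the model integral. Near `0`, `q x ≥ q₀ x^m / 2`, so both integrands are
dominated by `x^β e^{-s₀ - q₀ t x^m / 2}`; replacing `f x` by `f 0` costs a factor `O(x)`, and
replacing `q x` by `q₀ x^m` costs `t · O(x^{m+1})` because `u ↦ log (1 + e^u)` is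
`e^w`-Lipschitz on `u ≤ w`. By the same scaling both errors integrate to `O(t^{-(β+2)/m})`.
Away from `0`, `q` is bounded below by a positive constant and both integrands are `O(e^{-ct})`.
Bounds for large `t`, uniform in `s ≥ s₀`, are expressed with the filter `atTop ×ˢ 𝓟 (Ici s₀)`.
-/

open Set Real Filter Asymptotics

noncomputable def logOnePlusExp (u : ℝ) : ℝ := log (1 + exp u)

lemma logOnePlusExp_nonneg (u : ℝ) : 0 ≤ logOnePlusExp u :=
  log_nonneg (by linarith [exp_pos u])

lemma logOnePlusExp_le_exp (u : ℝ) : logOnePlusExp u ≤ exp u := by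
  have := log_le_sub_one_of_pos (x := 1 + exp u) (by positivity)
  rw [logOnePlusExp]
  linarith

lemma logOnePlusExp_mono : Monotone logOnePlusExp := fun u _ h =>
  log_le_log (by positivity : 0 < 1 + exp u) (by gcongr)

lemma continuous_logOnePlusExp : Continuous logOnePlusExp :=
  (continuous_const.add continuous_exp).log fun u => (by positivity : 1 + exp u ≠ 0)

lemma logOnePlusExp_sub_le {u v : ℝ} (h : u ≤ v) :
    logOnePlusExp v - logOnePlusExp u ≤ (v - u) * exp v := by
  have hu : 0 < 1 + exp u := by positivity
  have hlog : logOnePlusExp v - logOnePlusExp u ≤ (exp v - exp u) / (1 + exp u) := by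
    rw [logOnePlusExp, logOnePlusExp, ← log_div (by positivity) hu.ne']
    refine (log_le_sub_one_of_pos (by positivity)).trans_eq ?_
    field_simp
    ring
  have hdiv : (exp v - exp u) / (1 + exp u) ≤ exp v - exp u :=
    div_le_self (sub_nonneg.2 (exp_le_exp.2 h)) (by linarith [exp_pos u])
  have hexp : exp v - exp u ≤ (v - u) * exp v := by
    have hsplit : exp u = exp (u - v) * exp v := by rw [← exp_add, sub_add_cancel]
    nlinarith [add_one_le_exp (u - v), exp_pos v]
  linarith

lemma abs_logOnePlusExp_sub_le {u v w : ℝ} (hu : u ≤ w) (hv : v ≤ w) :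
    |logOnePlusExp u - logOnePlusExp v| ≤ |u - v| * exp w := by
  wlog h : u ≤ v generalizing u v
  · rw [abs_sub_comm, abs_sub_comm u]
    exact this hv hu (le_of_not_ge h)
  rw [abs_sub_comm, abs_of_nonneg (sub_nonneg.2 (logOnePlusExp_mono h)), abs_sub_comm,
    abs_of_nonneg (sub_nonneg.2 h)]
  exact (logOnePlusExp_sub_le h).trans
    (mul_le_mul_of_nonneg_left (exp_le_exp.2 hv) (sub_nonneg.2 h))

lemma integral_rpow_mul_comp_rpow {p : ℝ} (hp : 0 < p) (γ : ℝ) (g : ℝ → ℝ) :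
    ∫ x in Ioi 0, x ^ γ * g (x ^ p) = p⁻¹ * ∫ y in Ioi 0, y ^ ((γ + 1) / p - 1) * g y := by
  rw [← integral_comp_rpow_Ioi_of_pos (g := fun y => y ^ ((γ + 1) / p - 1) * g y) hp,
    ← integral_const_mul]
  refine setIntegral_congr_fun measurableSet_Ioi fun x (hx : 0 < x) => ?_
  have hpow : x ^ (p - 1) * (x ^ p) ^ ((γ + 1) / p - 1) = x ^ γ := by
    rw [← rpow_mul hx.le, ← rpow_add hx]
    congr 1
    field_simp
    ring
  simp only [smul_eq_mul]
  rw [← hpow]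
  field_simp

lemma integral_rpow_mul_comp_mul_rpow {p a : ℝ} (hp : 0 < p) (ha : 0 < a) (γ : ℝ)
    (g : ℝ → ℝ) :
    ∫ x in Ioi 0, x ^ γ * g (a * x ^ p) =
      a ^ (-((γ + 1) / p)) * ∫ x in Ioi 0, x ^ γ * g (x ^ p) := by
  set b := a ^ p⁻¹
  have hb : 0 < b := rpow_pos_of_pos ha _
  have hbp : b ^ p = a := by rw [← rpow_mul ha.le, inv_mul_cancel₀ hp.ne', rpow_one]
  have key := integral_comp_mul_left_Ioi (fun x => x ^ γ * g (x ^ p)) 0 hb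
  have hscale : ∫ x in Ioi 0, (b * x) ^ γ * g ((b * x) ^ p) =
      b ^ γ * ∫ x in Ioi 0, x ^ γ * g (a * x ^ p) := by
    rw [← integral_const_mul]
    refine setIntegral_congr_fun measurableSet_Ioi fun x (hx : 0 < x) => ?_
    rw [mul_rpow hb.le hx.le, mul_rpow hb.le hx.le, hbp, mul_assoc]
  rw [mul_zero, smul_eq_mul, hscale] at key
  have hexp : a ^ (-((γ + 1) / p)) = (b ^ γ)⁻¹ * b⁻¹ := by
    rw [← rpow_neg hb.le, ← rpow_neg_one, ← rpow_add hb, ← rpow_mul ha.le]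
    congr 1
    field_simp
    ring
  rw [hexp, mul_assoc, ← key, ← mul_assoc, inv_mul_cancel₀ (rpow_pos_of_pos hb _).ne', one_mul]

lemma integral_rpow_mul_logOnePlusExp {p a : ℝ} (hp : 0 < p) (ha : 0 < a) (γ s : ℝ) :
    ∫ x in Ioi 0, x ^ γ * logOnePlusExp (-s - a * x ^ p) =
      p⁻¹ * a ^ (-((γ + 1) / p)) * Fbeta ((γ + 1) / p - 1) s := by
  rw [integral_rpow_mul_comp_mul_rpow hp ha γ fun u => logOnePlusExp (-s - u),
    integral_rpow_mul_comp_rpow hp γ fun u => logOnePlusExp (-s - u), Fbeta]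
  simp only [logOnePlusExp]
  ring

lemma integral_rpow_mul_exp_neg_mul_rpow_mul {p a t : ℝ} (hp : 0 < p) (ht : 0 < t) (γ : ℝ) :
    ∫ x in Ioi 0, x ^ γ * exp (-(a * t) * x ^ p) =
      t ^ (-((γ + 1) / p)) * ∫ x in Ioi 0, x ^ γ * exp (-a * x ^ p) := by
  rw [← integral_rpow_mul_comp_mul_rpow hp ht γ fun u => exp (-a * u)]
  simp only [neg_mul, mul_assoc]

lemma integrableOn_rpow_mul_logOnePlusExp {p a γ : ℝ} (hp : 0 < p) (ha : 0 < a)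
    (hγ : -1 < γ) (s : ℝ) :
    IntegrableOn (fun x => x ^ γ * logOnePlusExp (-s - a * x ^ p)) (Ioi 0) := by
  refine ((integrableOn_rpow_mul_exp_neg_mul_rpow hγ hp ha).const_mul (exp (-s))).mono' ?_ ?_
  · refine ContinuousOn.aestronglyMeasurable ?_ measurableSet_Ioi
    have hpow : ∀ r : ℝ, ContinuousOn (fun x : ℝ => x ^ r) (Ioi 0) := fun r =>
      continuousOn_id.rpow_const fun x hx => Or.inl (ne_of_gt hx)
    exact (hpow γ).mul (continuous_logOnePlusExp.comp_continuousOn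
      (continuousOn_const.sub (continuousOn_const.mul (hpow p))))
  · filter_upwards [ae_restrict_mem measurableSet_Ioi] with x (hx : 0 < x)
    have hxγ : 0 ≤ x ^ γ := rpow_nonneg hx.le γ
    rw [norm_of_nonneg (mul_nonneg hxγ (logOnePlusExp_nonneg _))]
    calc x ^ γ * logOnePlusExp (-s - a * x ^ p) ≤ x ^ γ * exp (-s - a * x ^ p) :=
          mul_le_mul_of_nonneg_left (logOnePlusExp_le_exp _) hxγ
      _ = exp (-s) * (x ^ γ * exp (-a * x ^ p)) := by
          rw [sub_eq_add_neg, exp_add, neg_mul]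
          ring

lemma integrableOn_rpow_mul_of_continuousOn {β b : ℝ} (hβ : -1 < β) {h : ℝ → ℝ}
    (hh : ContinuousOn h (Icc 0 b)) : IntegrableOn (fun x => x ^ β * h x) (Ioo 0 b) := by
  rcases le_or_gt b 0 with hb | hb
  · simp [Ioo_eq_empty_of_le hb]
  have hrpow : IntegrableOn (fun x : ℝ => x ^ β) (Icc 0 b) := by
    rw [integrableOn_Icc_iff_integrableOn_Ioo,
      ← intervalIntegrable_iff_integrableOn_Ioo_of_le hb.le]
    exact intervalIntegral.intervalIntegrable_rpow' hβ
  exact (hrpow.mul_continuousOn hh isCompact_Icc).mono_set Ioo_subset_Icc_self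

lemma integrableOn_rpow_mul_mul_logOnePlusExp {β b : ℝ} (hβ : -1 < β) {f q : ℝ → ℝ}
    (hf : ContinuousOn f (Icc 0 b)) (hq : ContinuousOn q (Icc 0 b)) (s t : ℝ) :
    IntegrableOn (fun x => x ^ β * f x * logOnePlusExp (-s - t * q x)) (Ioo 0 b) := by
  simpa only [mul_assoc] using integrableOn_rpow_mul_of_continuousOn hβ
    (h := fun x => f x * logOnePlusExp (-s - t * q x)) (hf.mul
      (continuous_logOnePlusExp.comp_continuousOn
        (continuousOn_const.sub (continuousOn_const.mul hq))))

lemma abs_rpow_mul_logOnePlusExp_sub_le {p β q₀ a K C s₀ s t x y y₀ z : ℝ} (hx : 0 < x)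
    (ht : 0 ≤ t) (hs : s₀ ≤ s) (haq : a ≤ q₀) (hy : |y - y₀| ≤ K * x)
    (hz : |z - q₀ * x ^ p| ≤ C * x ^ (p + 1)) (hza : a * x ^ p ≤ z) :
    |x ^ β * y * logOnePlusExp (-s - t * z) -
        y₀ * (x ^ β * logOnePlusExp (-s - t * q₀ * x ^ p))| ≤
      exp (-s₀) * (K * (x ^ (β + 1) * exp (-(a * t) * x ^ p)) +
          |y₀| * C * t * (x ^ (β + p + 1) * exp (-(a * t) * x ^ p))) := by
  set w := -s₀ - a * t * x ^ p with hw
  have hxp : 0 ≤ x ^ p := rpow_nonneg hx.le p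
  have hxβ : 0 < x ^ β := rpow_pos_of_pos hx β
  have hz_w : -s - t * z ≤ w := by nlinarith [mul_le_mul_of_nonneg_left hza ht]
  have hq_w : -s - t * q₀ * x ^ p ≤ w := by
    nlinarith [mul_le_mul_of_nonneg_right haq (mul_nonneg ht hxp)]
  have hexp_w : exp w = exp (-s₀) * exp (-(a * t) * x ^ p) := by
    rw [hw, ← exp_add]
    ring_nf
  have hfirst :
      |x ^ β * (y - y₀) * logOnePlusExp (-s - t * z)| ≤ x ^ β * (K * x) * exp w := by
    rw [abs_mul, abs_mul, abs_of_pos hxβ, abs_of_nonneg (logOnePlusExp_nonneg _)]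
    exact mul_le_mul (mul_le_mul_of_nonneg_left hy hxβ.le)
      ((logOnePlusExp_le_exp _).trans (exp_le_exp.2 hz_w)) (logOnePlusExp_nonneg _)
      (mul_nonneg hxβ.le ((abs_nonneg _).trans hy))
  have hsecond :
      |y₀ * (x ^ β * (logOnePlusExp (-s - t * z) - logOnePlusExp (-s - t * q₀ * x ^ p)))| ≤
        |y₀| * (x ^ β * (t * (C * x ^ (p + 1)) * exp w)) := by
    rw [abs_mul, abs_mul, abs_of_pos hxβ]
    gcongr
    refine (abs_logOnePlusExp_sub_le hz_w hq_w).trans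
      (mul_le_mul_of_nonneg_right ?_ (exp_pos _).le)
    rw [show -s - t * z - (-s - t * q₀ * x ^ p) = -(t * (z - q₀ * x ^ p)) by ring, abs_neg,
      abs_mul, abs_of_nonneg ht]
    exact mul_le_mul_of_nonneg_left hz ht
  have hpow₁ : x ^ β * x = x ^ (β + 1) := (rpow_add_one hx.ne' β).symm
  have hpow₂ : x ^ β * x ^ (p + 1) = x ^ (β + p + 1) := by rw [← rpow_add hx, add_assoc]
  calc _ = |x ^ β * (y - y₀) * logOnePlusExp (-s - t * z) +
        y₀ * (x ^ β * (logOnePlusExp (-s - t * z) - logOnePlusExp (-s - t * q₀ * x ^ p)))| := by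
        ring_nf
    _ ≤ x ^ β * (K * x) * exp w + |y₀| * (x ^ β * (t * (C * x ^ (p + 1)) * exp w)) :=
        (abs_add_le _ _).trans (add_le_add hfirst hsecond)
    _ = _ := by
        rw [hexp_w, ← hpow₁, ← hpow₂]
        ring

lemma isBigO_setIntegral_of_abs_le_exp {S U : Set ℝ} (hS : MeasurableSet S)
    {F : ℝ × ℝ → ℝ → ℝ} {h : ℝ → ℝ} {c : ℝ} (hc : 0 < c) (hh : IntegrableOn h S)
    (hF : ∀ᶠ ts in atTop ×ˢ 𝓟 U, ∀ x ∈ S, |F ts x| ≤ exp (-c * ts.1) * h x) (r : ℝ) :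
    (fun ts => ∫ x in S, F ts x) =O[atTop ×ˢ 𝓟 U] fun ts => ts.1 ^ r := by
  refine IsBigO.trans ?_
    ((isLittleO_exp_neg_mul_rpow_atTop hc r).isBigO.comp_tendsto tendsto_fst)
  refine IsBigO.of_bound (∫ x in S, h x) ?_
  filter_upwards [hF] with ts hts
  rw [Function.comp_apply, norm_of_nonneg (exp_pos _).le, mul_comm, ← integral_const_mul]
  exact norm_integral_le_of_norm_le (hh.const_mul _) (ae_restrict_of_forall_mem hS hts)

lemma isBigO_integral_sub_near_zero {p β q₀ a η K C s₀ : ℝ} {f q : ℝ → ℝ} (hp : 0 < p)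
    (hβ : -1 < β) (ha : 0 < a) (haq : a ≤ q₀) (hK : 0 ≤ K) (hC : 0 ≤ C)
    (hfc : ContinuousOn f (Icc 0 η)) (hqc : ContinuousOn q (Icc 0 η))
    (hf : ∀ x ∈ Ioo 0 η, |f x - f 0| ≤ K * x)
    (hq : ∀ x ∈ Ioo 0 η, |q x - q₀ * x ^ p| ≤ C * x ^ (p + 1))
    (hqa : ∀ x ∈ Ioo 0 η, a * x ^ p ≤ q x) :
    (fun ts : ℝ × ℝ => (∫ x in Ioo 0 η, x ^ β * f x * logOnePlusExp (-ts.2 - ts.1 * q x)) -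
        f 0 * ∫ x in Ioo 0 η, x ^ β * logOnePlusExp (-ts.2 - ts.1 * q₀ * x ^ p))
      =O[atTop ×ˢ 𝓟 (Ici s₀)] fun ts => ts.1 ^ (-((β + 2) / p)) := by
  set J₁ := ∫ x in Ioi 0, x ^ (β + 1) * exp (-a * x ^ p)
  set J₂ := ∫ x in Ioi 0, x ^ (β + p + 1) * exp (-a * x ^ p)
  refine IsBigO.of_bound (exp (-s₀) * (K * J₁ + |f 0| * C * J₂)) ?_
  rw [eventually_prod_principal_iff]
  filter_upwards [eventually_gt_atTop 0] with t ht s (hs : s₀ ≤ s)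
  have hJ : ∀ γ : ℝ, -1 < γ →
      IntegrableOn (fun x => x ^ γ * exp (-(a * t) * x ^ p)) (Ioi 0) := fun γ hγ =>
    integrableOn_rpow_mul_exp_neg_mul_rpow hγ hp (mul_pos ha ht)
  set B : ℝ → ℝ := fun x => exp (-s₀) * (K * (x ^ (β + 1) * exp (-(a * t) * x ^ p)) +
    |f 0| * C * t * (x ^ (β + p + 1) * exp (-(a * t) * x ^ p)))
  have hB : IntegrableOn B (Ioi 0) :=
    (((hJ _ (by linarith)).const_mul K).add ((hJ _ (by linarith)).const_mul _)).const_mul _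
  have hB_nonneg : 0 ≤ᵐ[volume.restrict (Ioi 0)] B := by
    filter_upwards [ae_restrict_mem measurableSet_Ioi] with x (hx : 0 < x)
    positivity
  have hB_integral : ∫ x in Ioi 0, B x =
      exp (-s₀) * (K * J₁ + |f 0| * C * J₂) * t ^ (-((β + 2) / p)) := by
    have ht_pow : t * t ^ (-((β + p + 1 + 1) / p)) = t ^ (-((β + 2) / p)) := by
      rw [show -((β + 2) / p) = 1 + -((β + p + 1 + 1) / p) by field_simp; ring, rpow_add ht,
        rpow_one]
    simp only [B]
    rw [integral_const_mul, integral_add ((hJ _ (by linarith)).const_mul K)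
        ((hJ _ (by linarith)).const_mul _), integral_const_mul, integral_const_mul,
      integral_rpow_mul_exp_neg_mul_rpow_mul hp ht, integral_rpow_mul_exp_neg_mul_rpow_mul hp ht,
      show β + 1 + 1 = β + 2 by ring, ← ht_pow]
    ring
  have hg := integrableOn_rpow_mul_mul_logOnePlusExp hβ hfc hqc s t
  have hM : IntegrableOn (fun x => x ^ β * logOnePlusExp (-s - t * q₀ * x ^ p)) (Ioo 0 η) :=
    (integrableOn_rpow_mul_logOnePlusExp hp (mul_pos ht (ha.trans_le haq)) hβ s).mono_set
      Ioo_subset_Ioi_self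
  rw [norm_of_nonneg (rpow_nonneg ht.le _), ← integral_const_mul,
    ← integral_sub hg (hM.const_mul _)]
  calc _ ≤ ∫ x in Ioo 0 η, B x :=
        norm_integral_le_of_norm_le (hB.mono_set Ioo_subset_Ioi_self)
          (ae_restrict_of_forall_mem measurableSet_Ioo fun x hx =>
            abs_rpow_mul_logOnePlusExp_sub_le hx.1 ht.le hs haq (hf x hx) (hq x hx) (hqa x hx))
    _ ≤ ∫ x in Ioi 0, B x :=
        setIntegral_mono_set hB hB_nonneg Ioo_subset_Ioi_self.eventuallyLE
    _ = _ := hB_integral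

lemma isBigO_integral_Ico_rpow_mul_logOnePlusExp {β η δ c B s₀ : ℝ} {f q : ℝ → ℝ}
    (hη : 0 < η) (hc : 0 < c) (hcq : ∀ x ∈ Ico η δ, c ≤ q x) (hB : ∀ x ∈ Ico η δ, |f x| ≤ B)
    (r : ℝ) :
    (fun ts : ℝ × ℝ => ∫ x in Ico η δ, x ^ β * f x * logOnePlusExp (-ts.2 - ts.1 * q x))
      =O[atTop ×ˢ 𝓟 (Ici s₀)] fun ts => ts.1 ^ r := by
  have hint : IntegrableOn (fun x : ℝ => exp (-s₀) * B * x ^ β) (Ico η δ) :=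
    ((continuousOn_id.rpow_const fun x hx =>
      Or.inl (hη.trans_le hx.1).ne').integrableOn_Icc.mono_set Ico_subset_Icc_self).const_mul _
  refine isBigO_setIntegral_of_abs_le_exp measurableSet_Ico hc hint ?_ r
  rw [eventually_prod_principal_iff]
  filter_upwards [eventually_ge_atTop 0] with t ht s (hs : s₀ ≤ s) x hx
  have hxβ : 0 < x ^ β := rpow_pos_of_pos (hη.trans_le hx.1) β
  have hL : logOnePlusExp (-s - t * q x) ≤ exp (-c * t) * exp (-s₀) := by
    rw [← exp_add]
    refine (logOnePlusExp_le_exp _).trans (exp_le_exp.2 ?_)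
    nlinarith [mul_le_mul_of_nonneg_left (hcq x hx) ht]
  rw [abs_mul, abs_mul, abs_of_pos hxβ, abs_of_nonneg (logOnePlusExp_nonneg _)]
  calc x ^ β * |f x| * logOnePlusExp (-s - t * q x)
      ≤ x ^ β * B * (exp (-c * t) * exp (-s₀)) :=
        mul_le_mul (mul_le_mul_of_nonneg_left (hB x hx) hxβ.le) hL (logOnePlusExp_nonneg _)
          (mul_nonneg hxβ.le ((abs_nonneg _).trans (hB x hx)))
    _ = _ := by ring

lemma isBigO_integral_Ici_rpow_mul_logOnePlusExp {p β q₀ η s₀ : ℝ} (hp : 0 < p)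
    (hβ : -1 < β) (hq₀ : 0 < q₀) (hη : 0 < η) (r : ℝ) :
    (fun ts : ℝ × ℝ => ∫ x in Ici η, x ^ β * logOnePlusExp (-ts.2 - ts.1 * q₀ * x ^ p))
      =O[atTop ×ˢ 𝓟 (Ici s₀)] fun ts => ts.1 ^ r := by
  set c := q₀ * η ^ p
  have hc : 0 < c := mul_pos hq₀ (rpow_pos_of_pos hη p)
  have hint : IntegrableOn (fun x => exp (c - s₀) * (x ^ β * exp (-q₀ * x ^ p))) (Ici η) :=
    IntegrableOn.mono_set ((integrableOn_rpow_mul_exp_neg_mul_rpow hβ hp hq₀).const_mul _)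
      fun x hx => hη.trans_le hx
  refine isBigO_setIntegral_of_abs_le_exp measurableSet_Ici hc hint ?_ r
  rw [eventually_prod_principal_iff]
  filter_upwards [eventually_ge_atTop 1] with t ht s (hs : s₀ ≤ s) x (hx : η ≤ x)
  have hxβ : 0 < x ^ β := rpow_pos_of_pos (hη.trans_le hx) β
  have hηx : η ^ p ≤ x ^ p := rpow_le_rpow hη.le hx hp.le
  have hL : logOnePlusExp (-s - t * q₀ * x ^ p) ≤
      exp (-c * t) * (exp (c - s₀) * exp (-q₀ * x ^ p)) := by
    rw [← exp_add, ← exp_add]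
    refine (logOnePlusExp_le_exp _).trans (exp_le_exp.2 ?_)
    nlinarith [mul_le_mul_of_nonneg_left hηx (mul_nonneg (sub_nonneg.2 ht) hq₀.le)]
  rw [abs_mul, abs_of_pos hxβ, abs_of_nonneg (logOnePlusExp_nonneg _)]
  calc _ ≤ x ^ β * (exp (-c * t) * (exp (c - s₀) * exp (-q₀ * x ^ p))) :=
        mul_le_mul_of_nonneg_left hL hxβ.le
    _ = _ := by ring

lemma exists_forall_Ioo_abs_sub_le_and_le {p q₀ δ r C₁ : ℝ} {q : ℝ → ℝ} (hq₀ : 0 < q₀)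
    (hδ : 0 < δ) (hr : 0 < r)
    (hq : ∀ x, 0 ≤ x → x < r → x ≤ δ → |q x - q₀ * x ^ p| ≤ C₁ * x ^ (p + 1)) :
    ∃ η C, 0 < η ∧ η ≤ δ ∧ 0 ≤ C ∧ ∀ x ∈ Ioo 0 η,
      |q x - q₀ * x ^ p| ≤ C * x ^ (p + 1) ∧ q₀ / 2 * x ^ p ≤ q x := by
  set C := max C₁ 1
  have hC : 0 < C := lt_max_of_lt_right one_pos
  set η := min (min (r / 2) δ) (q₀ / (2 * C))
  have hη : 0 < η := lt_min (lt_min (half_pos hr) hδ) (by positivity)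
  have hηr : η ≤ r / 2 := (min_le_left _ _).trans (min_le_left _ _)
  have hηδ : η ≤ δ := (min_le_left _ _).trans (min_le_right _ _)
  have hCη : C * η ≤ q₀ / 2 := by
    have : η ≤ q₀ / (2 * C) := min_le_right _ _
    rw [le_div_iff₀ (by positivity)] at this
    linarith
  refine ⟨η, C, hη, hηδ, hC.le, fun x ⟨hx, hxη⟩ => ?_⟩
  have happrox : |q x - q₀ * x ^ p| ≤ C * x ^ (p + 1) :=
    (hq x hx.le (by linarith) (hxη.le.trans hηδ)).trans
      (mul_le_mul_of_nonneg_right (le_max_left _ _) (rpow_nonneg hx.le _))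
  refine ⟨happrox, ?_⟩
  rw [rpow_add_one hx.ne'] at happrox
  nlinarith [(abs_le.1 happrox).1, rpow_nonneg hx.le p,
    mul_le_mul_of_nonneg_left (mul_le_mul_of_nonneg_left hxη.le hC.le) (rpow_nonneg hx.le p)]

lemma integral_sub_model_eq {p β q₀ δ η : ℝ} {f q : ℝ → ℝ} (hp : 0 < p) (hβ : -1 < β)
    (hq₀ : 0 < q₀) (hη : 0 < η) (hηδ : η ≤ δ) (hf : ContinuousOn f (Icc 0 δ))
    (hq : ContinuousOn q (Icc 0 δ)) (s : ℝ) {t : ℝ} (ht : 0 < t) :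
    (∫ x in Ioo 0 δ, x ^ β * f x * logOnePlusExp (-s - t * q x)) -
        f 0 / (p * q₀ ^ ((β + 1) / p)) * t ^ (-((β + 1) / p)) * Fbeta ((β + 1) / p - 1) s =
      ((∫ x in Ioo 0 η, x ^ β * f x * logOnePlusExp (-s - t * q x)) -
          f 0 * ∫ x in Ioo 0 η, x ^ β * logOnePlusExp (-s - t * q₀ * x ^ p)) +
        (∫ x in Ico η δ, x ^ β * f x * logOnePlusExp (-s - t * q x)) -
        f 0 * ∫ x in Ici η, x ^ β * logOnePlusExp (-s - t * q₀ * x ^ p) := by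
  have hg := integrableOn_rpow_mul_mul_logOnePlusExp hβ hf hq s t
  have hM := integrableOn_rpow_mul_logOnePlusExp hp (mul_pos ht hq₀) hβ s
  have hsplit_g := setIntegral_union (disjoint_left.2 fun x hx hx' => hx.2.not_ge hx'.1)
    measurableSet_Ico (hg.mono_set (Ioo_subset_Ioo_right hηδ))
    (hg.mono_set fun x hx => ⟨hη.trans_le hx.1, hx.2⟩)
  have hsplit_M := setIntegral_union (disjoint_left.2 fun x hx hx' => hx.2.not_ge hx')
    measurableSet_Ici (hM.mono_set Ioo_subset_Ioi_self) (hM.mono_set fun x hx => hη.trans_le hx)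
  rw [Ioo_union_Ico_eq_Ioo hη hηδ] at hsplit_g
  rw [Ioo_union_Ici_eq_Ioi hη, integral_rpow_mul_logOnePlusExp hp (mul_pos ht hq₀),
    mul_rpow ht.le hq₀.le, rpow_neg hq₀.le] at hsplit_M
  linear_combination hsplit_g - f 0 * hsplit_M

lemma exists_pos_bound_of_isBigO_rpow {U : Set ℝ} {F : ℝ × ℝ → ℝ} {r : ℝ}
    (hF : F =O[atTop ×ˢ 𝓟 U] fun ts => ts.1 ^ r) :
    ∃ C T : ℝ, 0 < C ∧ 0 < T ∧ ∀ t, T ≤ t → ∀ s ∈ U, |F (t, s)| ≤ C * t ^ r := by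
  obtain ⟨C, hC, hCF⟩ := hF.exists_pos
  obtain ⟨T, hT⟩ := eventually_atTop.1 (eventually_prod_principal_iff.1 hCF.bound)
  refine ⟨C, max T 1, hC, by positivity, fun t ht s hs => ?_⟩
  have h := hT t (le_of_max_le_left ht) s hs
  rwa [norm_of_nonneg (rpow_nonneg (by linarith [le_max_right T 1]) _), Real.norm_eq_abs] at h

theorem isBigO_laplace_error {p β q₀ δ r C₁ s₀ : ℝ} {q f : ℝ → ℝ} (hp : 0 < p) (hβ : -1 < β)
    (hq₀ : 0 < q₀) (hδ : 0 < δ) (hr : 0 < r) (hqc : ContinuousOn q (Icc 0 δ))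
    (hqpos : ∀ x ∈ Ioc 0 δ, 0 < q x)
    (hq : ∀ x, 0 ≤ x → x < r → x ≤ δ → |q x - q₀ * x ^ p| ≤ C₁ * x ^ (p + 1))
    (hf : ContDiffOn ℝ 1 f (Icc 0 δ)) :
    (fun ts : ℝ × ℝ => (∫ x in Ioo 0 δ, x ^ β * f x * logOnePlusExp (-ts.2 - ts.1 * q x)) -
        f 0 / (p * q₀ ^ ((β + 1) / p)) * ts.1 ^ (-((β + 1) / p)) * Fbeta ((β + 1) / p - 1) ts.2)
      =O[atTop ×ˢ 𝓟 (Ici s₀)] fun ts => ts.1 ^ (-((β + 2) / p)) := by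
  obtain ⟨η, C, hη, hηδ, hC, hqη⟩ := exists_forall_Ioo_abs_sub_le_and_le hq₀ hδ hr hq
  obtain ⟨K, hK⟩ := hf.exists_lipschitzOnWith one_ne_zero (convex_Icc 0 δ) isCompact_Icc
  obtain ⟨B, hB⟩ := isCompact_Icc.exists_bound_of_continuousOn hf.continuousOn
  obtain ⟨c, hc, hcq⟩ : ∃ c, 0 < c ∧ ∀ x ∈ Icc η δ, c ≤ q x := by
    obtain ⟨x₀, hx₀, hmin⟩ := isCompact_Icc.exists_isMinOn (nonempty_Icc.2 hηδ)
      (hqc.mono (Icc_subset_Icc hη.le le_rfl))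
    exact ⟨q x₀, hqpos x₀ ⟨hη.trans_le hx₀.1, hx₀.2⟩, fun x hx => hmin hx⟩
  have hfη : ∀ x ∈ Ioo 0 η, |f x - f 0| ≤ K * x := fun x hx => by
    simpa [Real.dist_eq, abs_of_pos hx.1] using
      hK.dist_le_mul x ⟨hx.1.le, hx.2.le.trans hηδ⟩ 0 ⟨le_rfl, hδ.le⟩
  have hIcc_η : Icc 0 η ⊆ Icc 0 δ := Icc_subset_Icc le_rfl hηδ
  have hnear := isBigO_integral_sub_near_zero (s₀ := s₀) hp hβ (half_pos hq₀)
    (half_le_self hq₀.le) K.2 hC (hf.continuousOn.mono hIcc_η) (hqc.mono hIcc_η) hfη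
    (fun x hx => (hqη x hx).1) (fun x hx => (hqη x hx).2)
  have htail := isBigO_integral_Ico_rpow_mul_logOnePlusExp (β := β) (s₀ := s₀) hη hc
    (fun x hx => hcq x (Ico_subset_Icc_self hx))
    (fun x hx => (Real.norm_eq_abs _).symm.trans_le (hB x ⟨hη.le.trans hx.1, hx.2.le⟩))
    (-((β + 2) / p))
  have htailM := isBigO_integral_Ici_rpow_mul_logOnePlusExp (s₀ := s₀) hp hβ hq₀ hη
    (-((β + 2) / p))
  refine ((hnear.add htail).sub (htailM.const_mul_left (f 0))).congr' ?_ EventuallyEq.rfl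
  filter_upwards [tendsto_fst.eventually (eventually_gt_atTop 0)] with ⟨t, s⟩ (ht : 0 < t)
  exact (integral_sub_model_eq hp hβ hq₀ hη hηδ hf.continuousOn hqc s ht).symm

theorem statement8_general (m : ℕ) (hm : 1 ≤ m) (β q₀ δ : ℝ)
    (hβ : -1 < β) (hq₀ : 0 < q₀) (hδ : 0 < δ)
    (q f : ℝ → ℝ)
    (hqc : ContinuousOn q (Set.Icc 0 δ))
    (hqpos : ∀ x ∈ Set.Ioc (0 : ℝ) δ, 0 < q x)
    -- q extends holomorphically near 0 with q(z) = q₀ z^m + O(z^{m+1})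
    (hhol : ∃ (Qc : ℂ → ℂ) (r : ℝ), 0 < r ∧
      DifferentiableOn ℂ Qc (Metric.ball 0 r) ∧
      (∀ x : ℝ, 0 ≤ x → x < r → x ≤ δ → Qc (x : ℂ) = ((q x : ℝ) : ℂ)) ∧
      ∃ C₁ : ℝ, ∀ z ∈ Metric.ball (0 : ℂ) r,
        ‖Qc z - (q₀ : ℂ) * z ^ m‖ ≤ C₁ * ‖z‖ ^ (m + 1))
    (hf : ContDiffOn ℝ 1 f (Set.Icc 0 δ)) :
    ∀ s₀ : ℝ, ∃ C T : ℝ, 0 < C ∧ 0 < T ∧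
      ∀ t : ℝ, T ≤ t → ∀ s : ℝ, s₀ ≤ s →
        |(∫ x in Set.Ioo (0 : ℝ) δ, x ^ β * f x * Real.log (1 + Real.exp (-s - t * q x))) -
            (f 0 / ((m : ℝ) * q₀ ^ ((β + 1) / (m : ℝ)))) * t ^ (-((β + 1) / (m : ℝ))) *
              Fbeta ((β + 1) / (m : ℝ) - 1) s|
          ≤ C * t ^ (-((β + 2) / (m : ℝ))) := by
  intro s₀
  obtain ⟨Qc, r, hr, -, hQq, C₁, hC₁⟩ := hhol
  have hq : ∀ x : ℝ, 0 ≤ x → x < r → x ≤ δ →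
      |q x - q₀ * x ^ (m : ℝ)| ≤ C₁ * x ^ ((m : ℝ) + 1) := by
    intro x hx hxr hxδ
    have h := hC₁ x (by simpa [abs_of_nonneg hx] using hxr)
    rw [hQq x hx hxr hxδ, ← Complex.ofReal_pow, ← Complex.ofReal_mul, ← Complex.ofReal_sub,
      Complex.norm_real, Complex.norm_real, Real.norm_eq_abs, Real.norm_of_nonneg hx] at h
    rwa [show (m : ℝ) + 1 = ((m + 1 : ℕ) : ℝ) by push_cast; ring, rpow_natCast, rpow_natCast]
  exact exists_pos_bound_of_isBigO_rpow
    (isBigO_laplace_error (Nat.cast_pos.2 hm) hβ hq₀ hδ hr hqc hqpos hq hf)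

/-- General Laplace-type asymptotics (Proposition B.1(ii)), with sharp error order
`t^{−(β+2)/m}`. -/
theorem statement8 (m : ℕ) (hm : 1 ≤ m) (β q₀ δ : ℝ)
    (hβ : -1 < β) (hq₀ : 0 < q₀) (hδ : 0 < δ)
    (q f : ℝ → ℝ)
    (hqc : ContinuousOn q (Set.Icc 0 δ))
    (hqpos : ∀ x ∈ Set.Ioc (0 : ℝ) δ, 0 < q x)
    -- q extends holomorphically near 0 with q(z) = q₀ z^m + O(z^{m+1})
    (hhol : ∃ (Qc : ℂ → ℂ) (r : ℝ), 0 < r ∧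
      DifferentiableOn ℂ Qc (Metric.ball 0 r) ∧
      (∀ x : ℝ, 0 ≤ x → x < r → x ≤ δ → Qc (x : ℂ) = ((q x : ℝ) : ℂ)) ∧
      ∃ C₁ : ℝ, ∀ z ∈ Metric.ball (0 : ℂ) r,
        ‖Qc z - (q₀ : ℂ) * z ^ m‖ ≤ C₁ * ‖z‖ ^ (m + 1))
    (hf : ContDiffOn ℝ 1 f (Set.Icc 0 δ)) (hf0 : f 0 ≠ 0) :
    ∀ s₀ : ℝ, ∃ C T : ℝ, 0 < C ∧ 0 < T ∧
      ∀ t : ℝ, T ≤ t → ∀ s : ℝ, s₀ ≤ s →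
        |(∫ x in Set.Ioo (0 : ℝ) δ, x ^ β * f x * Real.log (1 + Real.exp (-s - t * q x))) -
            (f 0 / ((m : ℝ) * q₀ ^ ((β + 1) / (m : ℝ)))) * t ^ (-((β + 1) / (m : ℝ))) *
              Fbeta ((β + 1) / (m : ℝ) - 1) s|
          ≤ C * t ^ (-((β + 2) / (m : ℝ))) :=
  statement8_general m hm β q₀ δ hβ hq₀ hδ q f hqc hqpos hhol hf
end

section
/- (Asymptotics of the constant p₀ of the global parametrix, Proposition 5.2, first part.) Let a > 0, let m ≥ 1 be an integer, let t > 0, and let Q : [0,a] → ℝ be continuous with Q(x) > 0 for all x ∈ (0,a], holomorphic on a complex neighborhood of 0 and satisfying Q(z) = t·z^m + O(z^{m+1}) as z → 0. For n ∈ ℕ and s ∈ ℝ define p₀(n,s) := (1/(2π)) · ∫₀^a log(1 + e^{−s − n^{2m}·Q(x)}) / √(x(a−x)) dx and p_∞(s) := ( a^{−1/2}·t^{−1/(2m)}/(2πm) ) · F_{1/(2m) − 1}(s). Then for every s₀ ∈ ℝ there exist C > 0 and N ∈ ℕ such that for all n ≥ N and all s ≥ s₀: | p₀(n,s) − p_∞(s)/n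 | ≤ C·n^{−3}. -/
/-!
Write `μ = n^{2m}` and `softplus z = log (1 + exp z)`. The substitution `y = t μ x^m` turns
`p_∞(s)/n` into `(2π)⁻¹ ∫₀^∞ softplus (-s - t μ x^m) / √(a x) dx`, the integral defining `p₀`
with `Q` replaced by its leading term `t x^m` and the weight `1/√(x(a-x))` by its value near `0`.
On `(0, δ]` the two integrands differ by `O(e^{-s} (μ x^{m+1/2} + x^{1/2}) e^{-t μ x^m / 2})`,
whose integral is exactly of order `μ^{-3/(2m)} = n^{-3}` by scaling. Beyond `δ`, `Q` is bounded
below by some `c > 0`, so both integrands are `O(e^{-s - c μ})` there.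
-/

open MeasureTheory

open Set Real

noncomputable def softplus (z : ℝ) : ℝ := log (1 + exp z)

lemma softplus_nonneg (z : ℝ) : 0 ≤ softplus z :=
  log_nonneg (by linarith [exp_pos z])

lemma softplus_le_exp (z : ℝ) : softplus z ≤ exp z := by
  have := log_le_sub_one_of_pos (by positivity : 0 < 1 + exp z)
  unfold softplus; linarith

lemma softplus_mono : Monotone softplus := fun _ _ h =>
  log_le_log (by positivity) (by gcongr)

lemma continuous_softplus : Continuous softplus := by
  unfold softplus; fun_prop (disch := intro x; positivity)

lemma softplus_sub_softplus_le {z₁ z₂ : ℝ} (h : z₁ ≤ z₂) :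
    softplus z₂ - softplus z₁ ≤ exp z₂ * (z₂ - z₁) := by
  have h₁ : 0 < 1 + exp z₁ := by positivity
  calc softplus z₂ - softplus z₁ = log ((1 + exp z₂) / (1 + exp z₁)) := by
        rw [softplus, softplus, log_div (by positivity) h₁.ne']
    _ ≤ (1 + exp z₂) / (1 + exp z₁) - 1 := log_le_sub_one_of_pos (by positivity)
    _ = (exp z₂ - exp z₁) / (1 + exp z₁) := by field_simp; ring
    _ ≤ exp z₂ - exp z₁ := div_le_self (sub_nonneg.2 (exp_le_exp.2 h)) (by linarith [exp_pos z₁])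
    _ = exp z₂ * (1 - exp (-(z₂ - z₁))) := by rw [mul_sub, ← exp_add]; ring_nf
    _ ≤ exp z₂ * (z₂ - z₁) :=
      mul_le_mul_of_nonneg_left (by linarith [add_one_le_exp (-(z₂ - z₁))]) (exp_pos _).le

lemma abs_softplus_sub_softplus_le {z z₁ z₂ : ℝ} (h₁ : z₁ ≤ z) (h₂ : z₂ ≤ z) :
    |softplus z₁ - softplus z₂| ≤ exp z * |z₁ - z₂| := by
  rcases le_total z₁ z₂ with h | h
  · rw [abs_sub_comm, abs_of_nonneg (sub_nonneg.2 (softplus_mono h)), abs_sub_comm,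
      abs_of_nonneg (sub_nonneg.2 h)]
    exact (softplus_sub_softplus_le h).trans (by gcongr)
  · rw [abs_of_nonneg (sub_nonneg.2 (softplus_mono h)), abs_of_nonneg (sub_nonneg.2 h)]
    exact (softplus_sub_softplus_le h).trans (by gcongr)

lemma abs_softplus_sub_mul_sub_softplus_sub_mul_le {s μ ℓ p q : ℝ} (hμ : 0 ≤ μ) (hp : ℓ ≤ p)
    (hq : ℓ ≤ q) :
    |softplus (-s - μ * p) - softplus (-s - μ * q)| ≤ exp (-s - μ * ℓ) * (μ * |p - q|) := by
  have h := abs_softplus_sub_softplus_le (z := -s - μ * ℓ) (z₁ := -s - μ * p) (z₂ := -s - μ * q)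
    (by nlinarith) (by nlinarith)
  rwa [show -s - μ * p - (-s - μ * q) = -(μ * (p - q)) by ring, abs_neg, abs_mul,
    abs_of_nonneg hμ] at h

lemma exp_neg_mul_le_rpow_neg {c μ α : ℝ} (hc : 0 < c) (hμ : 1 ≤ μ) (hα : α ≤ 3) :
    exp (-(c * μ)) ≤ 6 / c ^ 3 * μ ^ (-α) := by
  have hμ0 : 0 < μ := by linarith
  have hcube : (c * μ) ^ 3 / 6 ≤ exp (c * μ) := by
    simpa [Nat.factorial] using pow_div_factorial_le_exp (c * μ) (by positivity) 3
  calc exp (-(c * μ)) = (exp (c * μ))⁻¹ := exp_neg _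
    _ ≤ ((c * μ) ^ 3 / 6)⁻¹ := inv_anti₀ (by positivity) hcube
    _ = 6 / c ^ 3 * μ ^ (-(3 : ℝ)) := by
      rw [rpow_neg hμ0.le, show (3 : ℝ) = ((3 : ℕ) : ℝ) by norm_num, rpow_natCast]
      field_simp
    _ ≤ 6 / c ^ 3 * μ ^ (-α) := by gcongr

lemma pow_two_mul_rpow_neg_div {x : ℝ} (hx : 0 < x) {m : ℕ} (hm : 0 < m) (y : ℝ) :
    (x ^ (2 * m)) ^ (-(y / (2 * m : ℝ))) = (x ^ y)⁻¹ := by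
  rw [← rpow_natCast, ← rpow_mul hx.le, ← rpow_neg hx.le]
  congr 1; push_cast; field_simp

lemma inv_sqrt_eq_rpow_mul_rpow {x y : ℝ} (hx : 0 ≤ x) (hy : 0 ≤ y) :
    (√(x * y))⁻¹ = x ^ (-(1 : ℝ) / 2) * y ^ (-(1 : ℝ) / 2) := by
  rw [sqrt_eq_rpow, ← rpow_neg (by positivity), mul_rpow hx hy]
  norm_num

lemma inv_sqrt_mul_sub_sub_inv_sqrt_mul_le {a x : ℝ} (hx : 0 < x) (hxa : x < a) :
    (√(x * (a - x)))⁻¹ - (√(a * x))⁻¹ ≤ x / a * (√(x * (a - x)))⁻¹ := by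
  have ha : 0 < a := hx.trans hxa
  have hu : 0 < (a - x) / a := div_pos (by linarith) ha
  have hW : √(x * (a - x)) = √(a * x) * √((a - x) / a) := by
    rw [← sqrt_mul (by positivity)]; congr 1; field_simp
  have hsqrt : (√((a - x) / a))⁻¹ * (1 - x / a) = √((a - x) / a) := by
    rw [show 1 - x / a = (a - x) / a by field_simp]
    nth_rewrite 2 [← mul_self_sqrt hu.le]
    field_simp [(sqrt_pos.2 hu).ne']
  have hle : √((a - x) / a) ≤ 1 := sqrt_le_one.2 ((div_le_one ha).2 (by linarith))
  have key : (√(x * (a - x)))⁻¹ - (√(a * x))⁻¹ - x / a * (√(x * (a - x)))⁻¹ =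
      (√(a * x))⁻¹ * (√((a - x) / a) - 1) := by
    rw [← hsqrt, hW, mul_inv]; ring
  nlinarith [inv_nonneg.2 (sqrt_nonneg (a * x))]

lemma inv_sqrt_mul_sub_le_of_le_half {a x : ℝ} (hx : 0 < x) (hxa : x ≤ a / 2) :
    (√(x * (a - x)))⁻¹ ≤ (a / 2) ^ (-(1 : ℝ) / 2) * x ^ (-(1 : ℝ) / 2) := by
  rw [inv_sqrt_eq_rpow_mul_rpow hx.le (by linarith), mul_comm]
  exact mul_le_mul_of_nonneg_right (rpow_le_rpow_of_nonpos (by linarith) (by linarith)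
    (by norm_num)) (by positivity)

lemma inv_sqrt_mul_sub_le_of_le {a δ x : ℝ} (hδ : 0 < δ) (hδx : δ ≤ x) (hxa : x < a) :
    (√(x * (a - x)))⁻¹ ≤ δ ^ (-(1 : ℝ) / 2) * (a - x) ^ (-(1 : ℝ) / 2) := by
  have hax : 0 < a - x := by linarith
  rw [inv_sqrt_eq_rpow_mul_rpow (by linarith) hax.le]
  exact mul_le_mul_of_nonneg_right (rpow_le_rpow_of_nonpos hδ hδx (by norm_num)) (by positivity)

lemma integral_rpow_mul_comp_mul_pow (f : ℝ → ℝ) {c : ℝ} (hc : 0 < c) {m : ℕ} (hm : 0 < m)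
    (q : ℝ) :
    ∫ x in Ioi 0, x ^ q * f (c * x ^ m) =
      c ^ (-(q + 1) / m) / m * ∫ y in Ioi 0, y ^ ((q + 1) / m - 1) * f y := by
  have hm' : (0 : ℝ) < m := Nat.cast_pos.2 hm
  set r := (q + 1) / m
  have hpow : EqOn (fun x : ℝ => x ^ q * f (c * x ^ m))
      (fun x => ((m : ℝ) * x ^ ((m : ℝ) - 1)) • (1 / (m : ℝ) * ((x ^ (m : ℝ)) ^ (r - 1) *
        f (c * x ^ (m : ℝ))))) (Ioi 0) := by
    intro x (hx : 0 < x)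
    dsimp only
    have hq : x ^ ((m : ℝ) - 1) * x ^ ((m : ℝ) * (r - 1)) = x ^ q := by
      rw [← rpow_add hx]; congr 1; simp only [r]; field_simp; ring
    rw [← rpow_natCast, smul_eq_mul, ← rpow_mul hx.le, ← hq]
    field_simp
  have hscale : EqOn (fun y : ℝ => y ^ (r - 1) * f (c * y))
      (fun y => c ^ (1 - r) * ((c * y) ^ (r - 1) * f (c * y))) (Ioi 0) := by
    intro y (hy : 0 < y)
    dsimp only
    rw [mul_rpow hc.le hy.le, ← mul_assoc, ← mul_assoc, ← rpow_add hc]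
    simp
  have hexp : c ^ (1 - r) * c ^ (-1 : ℝ) = c ^ (-(q + 1) / m) := by
    rw [← rpow_add hc]; congr 1; simp only [r]; ring
  rw [setIntegral_congr_fun measurableSet_Ioi hpow,
    integral_comp_rpow_Ioi_of_pos (g := fun y => 1 / (m : ℝ) * (y ^ (r - 1) * f (c * y))) hm',
    integral_const_mul, setIntegral_congr_fun measurableSet_Ioi hscale, integral_const_mul,
    integral_comp_mul_left_Ioi (fun u => u ^ (r - 1) * f u) 0 hc, mul_zero, smul_eq_mul,
    ← rpow_neg_one c, ← hexp]
  ring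

lemma integrableOn_rpow_mul_exp_neg_mul_pow {q b : ℝ} (hq : -1 < q) (hb : 0 < b) {m : ℕ}
    (hm : 0 < m) : IntegrableOn (fun x => x ^ q * exp (-(b * x ^ m))) (Ioi 0) := by
  simpa [rpow_natCast] using integrableOn_rpow_mul_exp_neg_mul_rpow hq (Nat.cast_pos.2 hm) hb

lemma integral_rpow_mul_exp_neg_mul_mul_pow {q b μ : ℝ} (hq : -1 < q) (hb : 0 < b) (hμ : 0 < μ)
    {m : ℕ} (hm : 0 < m) :
    ∫ x in Ioi 0, x ^ q * exp (-(b * μ * x ^ m)) =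
      μ ^ (-(q + 1) / m) * ∫ x in Ioi 0, x ^ q * exp (-(b * x ^ m)) := by
  have h := fun c : ℝ => fun hc : 0 < c =>
    integral_rpow_mul_exp_neg_mul_rpow (Nat.cast_pos.2 hm) hq hc
  simp only [rpow_natCast, neg_mul] at h
  rw [h _ (mul_pos hb hμ), h _ hb, mul_rpow hb.le hμ.le]
  ring

lemma integrableOn_Ioo_sub_rpow {a b r : ℝ} (hr : -1 < r) :
    IntegrableOn (fun x => (b - x) ^ r) (Ioo a b) := by
  have h := (intervalIntegral.intervalIntegrable_rpow' hr (a := 0) (b := b - a)).comp_sub_left b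
  simp only [sub_zero, sub_sub_cancel] at h
  exact h.2.mono_set Ioo_subset_Ioc_self

lemma integrableOn_of_abs_le {f g : ℝ → ℝ} {S : Set ℝ} (hS : MeasurableSet S)
    (hf : ContinuousOn f S) (hg : IntegrableOn g S) (hfg : ∀ x ∈ S, |f x| ≤ g x) :
    IntegrableOn f S :=
  hg.mono' (hf.aestronglyMeasurable hS) (ae_restrict_of_forall_mem hS hfg)

lemma setIntegral_Ioo_sub_setIntegral_Ioi {f g : ℝ → ℝ} {δ a : ℝ} (hδ : 0 ≤ δ) (hδa : δ < a)
    (hf₁ : IntegrableOn f (Ioc 0 δ)) (hf₂ : IntegrableOn f (Ioo δ a))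
    (hg : IntegrableOn g (Ioi 0)) :
    (∫ x in Ioo 0 a, f x) - ∫ x in Ioi 0, g x =
      (∫ x in Ioc 0 δ, (f x - g x)) + (∫ x in Ioo δ a, f x) - ∫ x in Ioi δ, g x := by
  have hg₁ : IntegrableOn g (Ioc 0 δ) := hg.mono_set Ioc_subset_Ioi_self
  rw [← Ioc_union_Ioo_eq_Ioo hδ hδa, ← Ioc_union_Ioi_eq_Ioi hδ,
    setIntegral_union (disjoint_left.2 fun _ hx hx' => lt_irrefl δ (hx'.1.trans_le hx.2))
      measurableSet_Ioo hf₁ hf₂,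
    setIntegral_union Ioc_disjoint_Ioi_same measurableSet_Ioi hg₁
      (hg.mono_set (Ioi_subset_Ioi hδ)), integral_sub hf₁ hg₁]
  ring

lemma abs_sub_le_of_complex_extension {Q : ℝ → ℝ} {Qc : ℂ → ℂ} {a t r C : ℝ} {m : ℕ}
    (hQc : ∀ x : ℝ, 0 ≤ x → x < r → x ≤ a → Qc x = Q x)
    (hC : ∀ z ∈ Metric.ball (0 : ℂ) r, ‖Qc z - t * z ^ m‖ ≤ C * ‖z‖ ^ (m + 1))
    {x : ℝ} (hx : 0 ≤ x) (hxr : x < r) (hxa : x ≤ a) :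
    |Q x - t * x ^ m| ≤ C * x ^ (m + 1) := by
  have hnorm : ‖(x : ℂ)‖ = x := by rw [Complex.norm_real, Real.norm_of_nonneg hx]
  have h := hC x (by rwa [Metric.mem_ball, dist_zero_right, hnorm])
  rwa [hQc x hx hxr hxa, hnorm, ← Complex.ofReal_pow, ← Complex.ofReal_mul,
    ← Complex.ofReal_sub, Complex.norm_real, Real.norm_eq_abs] at h

lemma exists_Ioc_taylor_bound {Q : ℝ → ℝ} {a t r C : ℝ} {m : ℕ} (ha : 0 < a) (ht : 0 < t)
    (hr : 0 < r) (hQr : ∀ x : ℝ, 0 ≤ x → x < r → x ≤ a → |Q x - t * x ^ m| ≤ C * x ^ (m + 1)) :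
    ∃ δ K, 0 < δ ∧ δ ≤ a / 2 ∧ 0 ≤ K ∧
      ∀ x ∈ Ioc 0 δ, |Q x - t * x ^ m| ≤ K * x ^ (m + 1) ∧ t / 2 * x ^ m ≤ Q x := by
  set K := max C 1
  have hK : 0 < K := lt_max_of_lt_right one_pos
  -- `δ ≤ t / (2K)` keeps the remainder `K x^(m+1)` below half the leading term `t x^m`.
  refine ⟨min (min (a / 2) (r / 2)) (t / (2 * K)), K, by positivity,
    (min_le_left _ _).trans (min_le_left _ _), hK.le, fun x hx => ?_⟩
  have hxa : x ≤ a / 2 := hx.2.trans ((min_le_left _ _).trans (min_le_left _ _))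
  have hxr : x ≤ r / 2 := hx.2.trans ((min_le_left _ _).trans (min_le_right _ _))
  have hKx : K * x ≤ t / 2 := by
    have := mul_le_mul_of_nonneg_left (hx.2.trans (min_le_right _ _)) hK.le
    rwa [mul_div_assoc', mul_comm 2 K, ← div_div, mul_div_cancel_left₀ _ hK.ne'] at this
  have hbound : |Q x - t * x ^ m| ≤ K * x ^ (m + 1) :=
    (hQr x hx.1.le (by linarith) (by linarith)).trans
      (mul_le_mul_of_nonneg_right (le_max_left _ _) (by positivity [hx.1]))
  refine ⟨hbound, ?_⟩
  have hlow := (abs_le.1 hbound).1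
  rw [pow_succ] at hlow
  nlinarith [mul_le_mul_of_nonneg_left hKx (pow_nonneg hx.1.le m)]

lemma exists_pos_le_of_continuousOn_Icc {Q : ℝ → ℝ} {δ a : ℝ} (hδa : δ ≤ a)
    (hQc : ContinuousOn Q (Icc δ a)) (hQpos : ∀ x ∈ Icc δ a, 0 < Q x) :
    ∃ c > 0, ∀ x ∈ Icc δ a, c ≤ Q x := by
  obtain ⟨x₀, hx₀, hmin⟩ := isCompact_Icc.exists_isMinOn (nonempty_Icc.2 hδa) hQc
  exact ⟨Q x₀, hQpos x₀ hx₀, fun x hx => hmin hx⟩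

noncomputable def p0Integrand (a : ℝ) (Q : ℝ → ℝ) (μ s x : ℝ) : ℝ :=
  softplus (-s - μ * Q x) / √(x * (a - x))

noncomputable def modelIntegrand (a t : ℝ) (m : ℕ) (μ s x : ℝ) : ℝ :=
  softplus (-s - t * μ * x ^ m) / √(a * x)

lemma abs_p0Integrand_le (a : ℝ) (Q : ℝ → ℝ) (μ s x : ℝ) :
    |p0Integrand a Q μ s x| ≤ exp (-s - μ * Q x) * (√(x * (a - x)))⁻¹ := by
  rw [p0Integrand, abs_div, abs_of_nonneg (softplus_nonneg _), abs_of_nonneg (sqrt_nonneg _),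
    div_eq_mul_inv]
  exact mul_le_mul_of_nonneg_right (softplus_le_exp _) (inv_nonneg.2 (sqrt_nonneg _))

lemma abs_modelIntegrand_le (a t : ℝ) (m : ℕ) (μ s x : ℝ) :
    |modelIntegrand a t m μ s x| ≤ exp (-s - t * μ * x ^ m) * (√(a * x))⁻¹ := by
  rw [modelIntegrand, abs_div, abs_of_nonneg (softplus_nonneg _), abs_of_nonneg (sqrt_nonneg _),
    div_eq_mul_inv]
  exact mul_le_mul_of_nonneg_right (softplus_le_exp _) (inv_nonneg.2 (sqrt_nonneg _))

lemma continuousOn_p0Integrand {a μ s : ℝ} {Q : ℝ → ℝ} {S : Set ℝ} (hQ : ContinuousOn Q S)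
    (hS : S ⊆ Ioo 0 a) : ContinuousOn (p0Integrand a Q μ s) S := by
  refine (continuous_softplus.comp_continuousOn (continuousOn_const.sub
    (continuousOn_const.mul hQ))).div (by fun_prop) fun x hx => ?_
  exact (sqrt_pos.2 (mul_pos (hS hx).1 (sub_pos.2 (hS hx).2))).ne'

lemma measurable_modelIntegrand (a t : ℝ) (m : ℕ) (μ s : ℝ) :
    Measurable (modelIntegrand a t m μ s) :=
  (continuous_softplus.measurable.comp (by fun_prop)).div (by fun_prop)

lemma integral_modelIntegrand {a t μ : ℝ} {m : ℕ} (ha : 0 < a) (ht : 0 < t) (hμ : 0 < μ)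
    (hm : 0 < m) (s : ℝ) :
    ∫ x in Ioi 0, modelIntegrand a t m μ s x =
      a ^ (-(1 : ℝ) / 2) * (t * μ) ^ (-(1 / (2 * (m : ℝ)))) / m *
        Fbeta (1 / (2 * (m : ℝ)) - 1) s := by
  have hJ : EqOn (modelIntegrand a t m μ s)
      (fun x => a ^ (-(1 : ℝ) / 2) * (x ^ (-(1 : ℝ) / 2) * softplus (-s - t * μ * x ^ m)))
      (Ioi 0) := fun x (hx : 0 < x) => by
    rw [modelIntegrand, div_eq_inv_mul, inv_sqrt_eq_rpow_mul_rpow ha.le hx.le, mul_assoc]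
  have hexp₁ : -(-(1 : ℝ) / 2 + 1) / m = -(1 / (2 * m)) := by field_simp; ring
  have hexp₂ : (-(1 : ℝ) / 2 + 1) / m - 1 = 1 / (2 * m) - 1 := by field_simp; ring
  rw [setIntegral_congr_fun measurableSet_Ioi hJ, integral_const_mul,
    integral_rpow_mul_comp_mul_pow (fun y => softplus (-s - y)) (mul_pos ht hμ) hm, hexp₁, hexp₂,
    mul_div_assoc, mul_assoc]
  rfl

lemma integrableOn_p0Integrand_Ioc {a δ μ s : ℝ} {Q : ℝ → ℝ} (hμ : 0 ≤ μ) (hδa : δ ≤ a / 2)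
    (hQc : ContinuousOn Q (Ioc 0 δ)) (hQ : ∀ x ∈ Ioc 0 δ, 0 ≤ Q x) :
    IntegrableOn (p0Integrand a Q μ s) (Ioc 0 δ) := by
  refine integrableOn_of_abs_le measurableSet_Ioc
    (continuousOn_p0Integrand hQc fun x hx => ⟨hx.1, by linarith [hx.1, hx.2]⟩)
    ((intervalIntegral.intervalIntegrable_rpow' (by norm_num : (-1 : ℝ) < -1 / 2)).1.const_mul
      (exp (-s) * (a / 2) ^ (-(1 : ℝ) / 2))) fun x hx => ?_
  have hQx : 0 ≤ μ * Q x := mul_nonneg hμ (hQ x hx)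
  calc |p0Integrand a Q μ s x| ≤ exp (-s - μ * Q x) * (√(x * (a - x)))⁻¹ :=
        abs_p0Integrand_le a Q μ s x
    _ ≤ exp (-s) * ((a / 2) ^ (-(1 : ℝ) / 2) * x ^ (-(1 : ℝ) / 2)) := by
      gcongr
      · linarith
      · exact inv_sqrt_mul_sub_le_of_le_half hx.1 (hx.2.trans hδa)
    _ = _ := by ring

lemma integrableOn_modelIntegrand {a t μ s : ℝ} {m : ℕ} (ha : 0 < a) (ht : 0 < t) (hμ : 0 < μ)
    (hm : 0 < m) : IntegrableOn (modelIntegrand a t m μ s) (Ioi 0) := by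
  refine ((integrableOn_rpow_mul_exp_neg_mul_pow (by norm_num : (-1 : ℝ) < -1 / 2)
    (mul_pos ht hμ) hm).const_mul (exp (-s) * a ^ (-(1 : ℝ) / 2))).mono'
    (measurable_modelIntegrand a t m μ s).aestronglyMeasurable
    (ae_restrict_of_forall_mem measurableSet_Ioi fun x (hx : 0 < x) => ?_)
  calc ‖modelIntegrand a t m μ s x‖ ≤ exp (-s - t * μ * x ^ m) * (√(a * x))⁻¹ :=
        abs_modelIntegrand_le a t m μ s x
    _ = _ := by
      rw [inv_sqrt_eq_rpow_mul_rpow ha.le hx.le, sub_eq_add_neg, exp_add]; ring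

lemma abs_p0Integrand_sub_modelIntegrand_le {a t K μ s x : ℝ} {m : ℕ} {Q : ℝ → ℝ} (ht : 0 ≤ t)
    (hμ : 0 ≤ μ) (hx : 0 < x) (hxa : x ≤ a / 2) (hQ : |Q x - t * x ^ m| ≤ K * x ^ (m + 1))
    (hQlow : t / 2 * x ^ m ≤ Q x) :
    |p0Integrand a Q μ s x - modelIntegrand a t m μ s x| ≤
      exp (-s) * (a / 2) ^ (-(1 : ℝ) / 2) *
        (μ * K * (x ^ ((m : ℝ) + 1 / 2) * exp (-(t / 2 * μ * x ^ m))) +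
          a⁻¹ * (x ^ ((1 : ℝ) / 2) * exp (-(t / 2 * μ * x ^ m)))) := by
  have ha : 0 < a := by linarith
  have hK : 0 ≤ K := nonneg_of_mul_nonneg_left ((abs_nonneg _).trans hQ) (by positivity)
  set W := √(x * (a - x))
  set V := √(a * x)
  set z := -s - μ * (t / 2 * x ^ m)
  have hxm : 0 ≤ x ^ m := pow_nonneg hx.le m
  have hmodel : -s - t * μ * x ^ m = -s - μ * (t * x ^ m) := by ring
  have hdiff : |softplus (-s - μ * Q x) - softplus (-s - t * μ * x ^ m)| ≤
      exp z * (μ * K * x ^ (m + 1)) := by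
    rw [hmodel, mul_assoc]
    exact (abs_softplus_sub_mul_sub_softplus_sub_mul_le hμ hQlow (by nlinarith)).trans
      (mul_le_mul_of_nonneg_left (mul_le_mul_of_nonneg_left hQ hμ) (exp_pos z).le)
  have hsp : softplus (-s - t * μ * x ^ m) ≤ exp z :=
    (softplus_le_exp _).trans (exp_le_exp.2 (by simp only [z]; nlinarith [mul_nonneg hμ hxm]))
  have hWV : 0 ≤ W⁻¹ - V⁻¹ :=
    sub_nonneg.2 (inv_anti₀ (sqrt_pos.2 (by nlinarith)) (sqrt_le_sqrt (by nlinarith)))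
  have hweight := inv_sqrt_mul_sub_sub_inv_sqrt_mul_le hx (by linarith : x < a)
  have hpow₁ : x ^ (m + 1) * x ^ (-(1 : ℝ) / 2) = x ^ ((m : ℝ) + 1 / 2) := by
    rw [← rpow_natCast, ← rpow_add hx]; push_cast; ring_nf
  have hpow₂ : x * x ^ (-(1 : ℝ) / 2) = x ^ ((1 : ℝ) / 2) := by
    rw [← rpow_one_add' hx.le (by norm_num)]; norm_num
  calc |softplus (-s - μ * Q x) / W - softplus (-s - t * μ * x ^ m) / V|
      = |(softplus (-s - μ * Q x) - softplus (-s - t * μ * x ^ m)) * W⁻¹ +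
          softplus (-s - t * μ * x ^ m) * (W⁻¹ - V⁻¹)| := by congr 1; ring
    _ ≤ |softplus (-s - μ * Q x) - softplus (-s - t * μ * x ^ m)| * W⁻¹ +
          softplus (-s - t * μ * x ^ m) * (W⁻¹ - V⁻¹) := by
      refine (abs_add_le _ _).trans (le_of_eq ?_)
      rw [abs_mul, abs_mul, abs_of_nonneg (inv_nonneg.2 (sqrt_nonneg _)),
        abs_of_nonneg (softplus_nonneg _), abs_of_nonneg hWV]
    _ ≤ exp z * (μ * K * x ^ (m + 1)) * W⁻¹ + exp z * (x / a * W⁻¹) :=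
      add_le_add (mul_le_mul_of_nonneg_right hdiff (by positivity))
        (mul_le_mul hsp hweight hWV (exp_pos z).le)
    _ = exp z * (μ * K * x ^ (m + 1) + x / a) * W⁻¹ := by ring
    _ ≤ exp z * (μ * K * x ^ (m + 1) + x / a) *
          ((a / 2) ^ (-(1 : ℝ) / 2) * x ^ (-(1 : ℝ) / 2)) :=
      mul_le_mul_of_nonneg_left (inv_sqrt_mul_sub_le_of_le_half hx hxa) (by positivity)
    _ = _ := by
      rw [show z = -s + -(t / 2 * μ * x ^ m) by ring, exp_add, ← hpow₁, ← hpow₂]; ring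

lemma integral_taylor_profile {b K c μ : ℝ} {m : ℕ} (hb : 0 < b) (hμ : 0 < μ) (hm : 0 < m) :
    ∫ x in Ioi 0, (μ * K * (x ^ ((m : ℝ) + 1 / 2) * exp (-(b * μ * x ^ m))) +
        c * (x ^ ((1 : ℝ) / 2) * exp (-(b * μ * x ^ m)))) =
      (K * (∫ x in Ioi 0, x ^ ((m : ℝ) + 1 / 2) * exp (-(b * x ^ m))) +
        c * ∫ x in Ioi 0, x ^ ((1 : ℝ) / 2) * exp (-(b * x ^ m))) * μ ^ (-(3 / (2 * m : ℝ))) := by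
  have hq₁ : (-1 : ℝ) < m + 1 / 2 := by linarith [(Nat.cast_nonneg m : (0 : ℝ) ≤ m)]
  have hq₂ : (-1 : ℝ) < 1 / 2 := by norm_num
  have hsum : 1 + -((m : ℝ) + 1 / 2 + 1) / m = -(3 / (2 * m : ℝ)) := by field_simp; ring
  have hexp₁ : μ * μ ^ (-((m : ℝ) + 1 / 2 + 1) / m) = μ ^ (-(3 / (2 * m : ℝ))) := by
    rw [← rpow_one_add' hμ.le (by rw [hsum]; exact neg_ne_zero.2 (by positivity)), hsum]
  have hexp₂ : μ ^ (-((1 : ℝ) / 2 + 1) / m) = μ ^ (-(3 / (2 * m : ℝ))) := by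
    congr 1; field_simp; ring
  rw [integral_add ((integrableOn_rpow_mul_exp_neg_mul_pow hq₁ (mul_pos hb hμ) hm).const_mul _)
      ((integrableOn_rpow_mul_exp_neg_mul_pow hq₂ (mul_pos hb hμ) hm).const_mul _),
    integral_const_mul, integral_const_mul, integral_rpow_mul_exp_neg_mul_mul_pow hq₁ hb hμ hm,
    integral_rpow_mul_exp_neg_mul_mul_pow hq₂ hb hμ hm, hexp₂, ← hexp₁]
  ring

lemma exists_abs_setIntegral_p0Integrand_sub_modelIntegrand_Ioc_le {a t δ K : ℝ} {m : ℕ}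
    {Q : ℝ → ℝ} (ha : 0 < a) (ht : 0 < t) (hm : 0 < m) (hδa : δ ≤ a / 2) (hK : 0 ≤ K)
    (hQ : ∀ x ∈ Ioc 0 δ, |Q x - t * x ^ m| ≤ K * x ^ (m + 1) ∧ t / 2 * x ^ m ≤ Q x) :
    ∃ B, ∀ μ > 0, ∀ s, |∫ x in Ioc 0 δ, (p0Integrand a Q μ s x - modelIntegrand a t m μ s x)| ≤
      B * exp (-s) * μ ^ (-(3 / (2 * m : ℝ))) := by
  have ht2 : 0 < t / 2 := by linarith
  refine ⟨(a / 2) ^ (-(1 : ℝ) / 2) *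
    (K * (∫ x in Ioi 0, x ^ ((m : ℝ) + 1 / 2) * exp (-(t / 2 * x ^ m))) +
      a⁻¹ * ∫ x in Ioi 0, x ^ ((1 : ℝ) / 2) * exp (-(t / 2 * x ^ m))), fun μ hμ s => ?_⟩
  have hg : IntegrableOn (fun x => exp (-s) * (a / 2) ^ (-(1 : ℝ) / 2) *
      (μ * K * (x ^ ((m : ℝ) + 1 / 2) * exp (-(t / 2 * μ * x ^ m))) +
        a⁻¹ * (x ^ ((1 : ℝ) / 2) * exp (-(t / 2 * μ * x ^ m))))) (Ioi 0) :=
    (((integrableOn_rpow_mul_exp_neg_mul_pow (by linarith [(Nat.cast_nonneg m : (0 : ℝ) ≤ m)])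
      (mul_pos ht2 hμ) hm).const_mul (μ * K)).add
      ((integrableOn_rpow_mul_exp_neg_mul_pow (by norm_num) (mul_pos ht2 hμ) hm).const_mul
        a⁻¹)).const_mul _
  calc |∫ x in Ioc 0 δ, (p0Integrand a Q μ s x - modelIntegrand a t m μ s x)|
      ≤ ∫ x in Ioc 0 δ, exp (-s) * (a / 2) ^ (-(1 : ℝ) / 2) *
          (μ * K * (x ^ ((m : ℝ) + 1 / 2) * exp (-(t / 2 * μ * x ^ m))) +
            a⁻¹ * (x ^ ((1 : ℝ) / 2) * exp (-(t / 2 * μ * x ^ m)))) :=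
        Real.norm_eq_abs _ ▸ norm_integral_le_of_norm_le (hg.mono_set Ioc_subset_Ioi_self)
          (ae_restrict_of_forall_mem measurableSet_Ioc fun x hx =>
            abs_p0Integrand_sub_modelIntegrand_le ht.le hμ.le hx.1 (hx.2.trans hδa)
              (hQ x hx).1 (hQ x hx).2)
    _ ≤ ∫ x in Ioi 0, exp (-s) * (a / 2) ^ (-(1 : ℝ) / 2) *
          (μ * K * (x ^ ((m : ℝ) + 1 / 2) * exp (-(t / 2 * μ * x ^ m))) +
            a⁻¹ * (x ^ ((1 : ℝ) / 2) * exp (-(t / 2 * μ * x ^ m)))) :=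
      setIntegral_mono_set hg (ae_restrict_of_forall_mem measurableSet_Ioi
        fun x (hx : 0 < x) => by positivity) Ioc_subset_Ioi_self.eventuallyLE
    _ = _ := by rw [integral_const_mul, integral_taylor_profile ht2 hμ hm]; ring

lemma exists_abs_setIntegral_p0Integrand_Ioo_le {a δ c : ℝ} {Q : ℝ → ℝ} (hδ : 0 < δ)
    (hQc : ContinuousOn Q (Ioo δ a)) (hQ : ∀ x ∈ Ioo δ a, c ≤ Q x) :
    ∃ B ≥ 0, ∀ μ ≥ 0, ∀ s, IntegrableOn (p0Integrand a Q μ s) (Ioo δ a) ∧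
      |∫ x in Ioo δ a, p0Integrand a Q μ s x| ≤ B * exp (-s) * exp (-(c * μ)) := by
  have hint := integrableOn_Ioo_sub_rpow (a := δ) (b := a) (by norm_num : (-1 : ℝ) < -1 / 2)
  refine ⟨δ ^ (-(1 : ℝ) / 2) * ∫ x in Ioo δ a, (a - x) ^ (-(1 : ℝ) / 2),
    mul_nonneg (by positivity) (setIntegral_nonneg measurableSet_Ioo fun x hx => by
      have : 0 < a - x := sub_pos.2 hx.2
      positivity), fun μ hμ s => ?_⟩
  have hbound : ∀ x ∈ Ioo δ a, |p0Integrand a Q μ s x| ≤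
      exp (-s) * exp (-(c * μ)) * δ ^ (-(1 : ℝ) / 2) * (a - x) ^ (-(1 : ℝ) / 2) := by
    intro x hx
    calc |p0Integrand a Q μ s x| ≤ exp (-s - μ * Q x) * (√(x * (a - x)))⁻¹ :=
          abs_p0Integrand_le a Q μ s x
      _ ≤ exp (-s + -(c * μ)) * (δ ^ (-(1 : ℝ) / 2) * (a - x) ^ (-(1 : ℝ) / 2)) := by
        gcongr
        · nlinarith [hQ x hx]
        · exact inv_sqrt_mul_sub_le_of_le hδ hx.1.le hx.2
      _ = _ := by rw [exp_add]; ring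
  have hg := hint.const_mul (exp (-s) * exp (-(c * μ)) * δ ^ (-(1 : ℝ) / 2))
  refine ⟨integrableOn_of_abs_le measurableSet_Ioo
    (continuousOn_p0Integrand hQc fun x hx => ⟨hδ.trans hx.1, hx.2⟩) hg hbound, ?_⟩
  calc |∫ x in Ioo δ a, p0Integrand a Q μ s x|
      ≤ ∫ x in Ioo δ a, exp (-s) * exp (-(c * μ)) * δ ^ (-(1 : ℝ) / 2) *
          (a - x) ^ (-(1 : ℝ) / 2) :=
        Real.norm_eq_abs _ ▸ norm_integral_le_of_norm_le hg
          (ae_restrict_of_forall_mem measurableSet_Ioo hbound)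
    _ = _ := by rw [integral_const_mul]; ring

lemma exists_abs_setIntegral_modelIntegrand_Ioi_le {a t δ : ℝ} {m : ℕ} (ha : 0 < a)
    (ht : 0 < t) (hm : 0 < m) (hδ : 0 < δ) :
    ∃ B ≥ 0, ∀ μ ≥ 1, ∀ s, |∫ x in Ioi δ, modelIntegrand a t m μ s x| ≤
      B * exp (-s) * exp (-(t / 2 * δ ^ m * μ)) := by
  have hint : IntegrableOn (fun x => exp (-(t / 2 * x ^ m))) (Ioi δ) := by
    have h := integrableOn_rpow_mul_exp_neg_mul_pow (by norm_num : (-1 : ℝ) < 0)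
      (by linarith : 0 < t / 2) hm
    simp only [rpow_zero, one_mul] at h
    exact h.mono_set (Ioi_subset_Ioi hδ.le)
  refine ⟨(√(a * δ))⁻¹ * ∫ x in Ioi δ, exp (-(t / 2 * x ^ m)),
    mul_nonneg (by positivity) (setIntegral_nonneg measurableSet_Ioi fun x _ => by positivity),
    fun μ hμ s => ?_⟩
  have hbound : ∀ x ∈ Ioi δ, |modelIntegrand a t m μ s x| ≤
      exp (-s) * exp (-(t / 2 * δ ^ m * μ)) * (√(a * δ))⁻¹ * exp (-(t / 2 * x ^ m)) := by
    intro x (hx : δ < x)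
    have hδx : δ ^ m ≤ x ^ m := pow_le_pow_left₀ hδ.le hx.le m
    have hxμ : x ^ m ≤ μ * x ^ m := le_mul_of_one_le_left (pow_pos (hδ.trans hx) m).le hμ
    have h₁ := mul_le_mul_of_nonneg_left hδx (by positivity : 0 ≤ t / 2 * μ)
    have h₂ := mul_le_mul_of_nonneg_left hxμ (by positivity : 0 ≤ t / 2)
    calc |modelIntegrand a t m μ s x| ≤ exp (-s - t * μ * x ^ m) * (√(a * x))⁻¹ :=
          abs_modelIntegrand_le a t m μ s x
      _ ≤ exp (-s + -(t / 2 * δ ^ m * μ) + -(t / 2 * x ^ m)) * (√(a * δ))⁻¹ := by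
        refine mul_le_mul (exp_le_exp.2 (by linarith)) ?_ (by positivity) (exp_pos _).le
        exact inv_anti₀ (by positivity) (sqrt_le_sqrt (by nlinarith))
      _ = _ := by rw [exp_add, exp_add]; ring
  have hg := hint.const_mul (exp (-s) * exp (-(t / 2 * δ ^ m * μ)) * (√(a * δ))⁻¹)
  calc |∫ x in Ioi δ, modelIntegrand a t m μ s x|
      ≤ ∫ x in Ioi δ, exp (-s) * exp (-(t / 2 * δ ^ m * μ)) * (√(a * δ))⁻¹ *
          exp (-(t / 2 * x ^ m)) :=
        Real.norm_eq_abs _ ▸ norm_integral_le_of_norm_le hg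
          (ae_restrict_of_forall_mem measurableSet_Ioi hbound)
    _ = _ := by rw [integral_const_mul]; ring

lemma exists_abs_integral_p0Integrand_sub_integral_modelIntegrand_le {a t δ K c : ℝ} {m : ℕ}
    {Q : ℝ → ℝ} (ha : 0 < a) (ht : 0 < t) (hm : 0 < m) (hδ : 0 < δ) (hδa : δ ≤ a / 2)
    (hK : 0 ≤ K) (hc : 0 < c) (hQc : ContinuousOn Q (Icc 0 a))
    (hQδ : ∀ x ∈ Ioc 0 δ, |Q x - t * x ^ m| ≤ K * x ^ (m + 1) ∧ t / 2 * x ^ m ≤ Q x)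
    (hQc' : ∀ x ∈ Ioo δ a, c ≤ Q x) :
    ∃ C > 0, ∀ μ ≥ 1, ∀ s, |(∫ x in Ioo 0 a, p0Integrand a Q μ s x) -
      ∫ x in Ioi 0, modelIntegrand a t m μ s x| ≤ C * exp (-s) * μ ^ (-(3 / (2 * m : ℝ))) := by
  obtain ⟨B₁, hB₁⟩ :=
    exists_abs_setIntegral_p0Integrand_sub_modelIntegrand_Ioc_le ha ht hm hδa hK hQδ
  obtain ⟨B₂, hB₂0, hB₂⟩ := exists_abs_setIntegral_p0Integrand_Ioo_le hδ
    (hQc.mono fun x hx => ⟨hδ.le.trans hx.1.le, hx.2.le⟩) hQc'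
  obtain ⟨B₃, hB₃0, hB₃⟩ := exists_abs_setIntegral_modelIntegrand_Ioi_le (m := m) ha ht hm hδ
  have hc' : 0 < t / 2 * δ ^ m := by positivity
  refine ⟨|B₁| + B₂ * (6 / c ^ 3) + B₃ * (6 / (t / 2 * δ ^ m) ^ 3) + 1, by positivity,
    fun μ hμ s => ?_⟩
  have hμ0 : 0 < μ := by linarith
  have hα : 3 / (2 * m : ℝ) ≤ 3 := by
    rw [div_le_iff₀ (by positivity)]
    nlinarith [(Nat.one_le_cast.2 hm : (1 : ℝ) ≤ m)]
  obtain ⟨hF₂, hI₂⟩ := hB₂ μ hμ0.le s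
  have hF₁ : IntegrableOn (p0Integrand a Q μ s) (Ioc 0 δ) :=
    integrableOn_p0Integrand_Ioc hμ0.le hδa (hQc.mono fun x hx => ⟨hx.1.le, by linarith [hx.2]⟩)
      fun x hx => (by have := hx.1; positivity : 0 ≤ t / 2 * x ^ m).trans (hQδ x hx).2
  rw [setIntegral_Ioo_sub_setIntegral_Ioi hδ.le (by linarith) hF₁ hF₂
    (integrableOn_modelIntegrand ha ht hμ0 hm)]
  calc _ ≤ |∫ x in Ioc 0 δ, (p0Integrand a Q μ s x - modelIntegrand a t m μ s x)| +
          |∫ x in Ioo δ a, p0Integrand a Q μ s x| +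
          |∫ x in Ioi δ, modelIntegrand a t m μ s x| :=
        (abs_sub _ _).trans (add_le_add (abs_add_le _ _) le_rfl)
    _ ≤ B₁ * exp (-s) * μ ^ (-(3 / (2 * m : ℝ))) + B₂ * exp (-s) * exp (-(c * μ)) +
          B₃ * exp (-s) * exp (-(t / 2 * δ ^ m * μ)) :=
        add_le_add (add_le_add (hB₁ μ hμ0 s) hI₂) (hB₃ μ hμ s)
    _ ≤ B₁ * exp (-s) * μ ^ (-(3 / (2 * m : ℝ))) +
          B₂ * exp (-s) * (6 / c ^ 3 * μ ^ (-(3 / (2 * m : ℝ)))) +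
          B₃ * exp (-s) * (6 / (t / 2 * δ ^ m) ^ 3 * μ ^ (-(3 / (2 * m : ℝ)))) := by
      gcongr
      · exact exp_neg_mul_le_rpow_neg hc hμ hα
      · exact exp_neg_mul_le_rpow_neg hc' hμ hα
    _ ≤ _ := by
      have : 0 ≤ exp (-s) * μ ^ (-(3 / (2 * m : ℝ))) := by positivity
      nlinarith [le_abs_self B₁]

/-- Asymptotics of the constant `p₀` of the global parametrix
(Proposition 5.2, first part). -/
theorem statement9 (a t : ℝ) (ha : 0 < a) (ht : 0 < t) (m : ℕ) (hm : 1 ≤ m)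
    (Q : ℝ → ℝ)
    (hQc : ContinuousOn Q (Set.Icc 0 a))
    (hQpos : ∀ x ∈ Set.Ioc (0 : ℝ) a, 0 < Q x)
    -- Q extends holomorphically near 0 with Q(z) = t z^m + O(z^{m+1})
    (hhol : ∃ (Qc : ℂ → ℂ) (r : ℝ), 0 < r ∧
      DifferentiableOn ℂ Qc (Metric.ball 0 r) ∧
      (∀ x : ℝ, 0 ≤ x → x < r → x ≤ a → Qc (x : ℂ) = ((Q x : ℝ) : ℂ)) ∧
      ∃ C₁ : ℝ, ∀ z ∈ Metric.ball (0 : ℂ) r,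
        ‖Qc z - (t : ℂ) * z ^ m‖ ≤ C₁ * ‖z‖ ^ (m + 1)) :
    ∀ s₀ : ℝ, ∃ (C : ℝ) (N : ℕ), 0 < C ∧
      ∀ n : ℕ, N ≤ n → ∀ s : ℝ, s₀ ≤ s →
        |(1 / (2 * Real.pi)) * (∫ x in Set.Ioo (0 : ℝ) a,
              Real.log (1 + Real.exp (-s - (n : ℝ) ^ (2 * m) * Q x)) / Real.sqrt (x * (a - x))) -
            ((a ^ (-(1 : ℝ) / 2) * t ^ (-(1 / (2 * (m : ℝ)))) / (2 * Real.pi * m)) *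
              Fbeta (1 / (2 * (m : ℝ)) - 1) s) / n|
          ≤ C / (n : ℝ) ^ 3 := by
  obtain ⟨Qc, r, hr, -, hQcr, C₁, hC₁⟩ := hhol
  obtain ⟨δ, K, hδ, hδa, hK, hQδ⟩ := exists_Ioc_taylor_bound ha ht hr
    fun x hx hxr hxa => abs_sub_le_of_complex_extension hQcr hC₁ hx hxr hxa
  obtain ⟨c, hc, hcQ⟩ := exists_pos_le_of_continuousOn_Icc (by linarith : δ ≤ a)
    (hQc.mono (Icc_subset_Icc hδ.le le_rfl)) fun x hx => hQpos x ⟨hδ.trans_le hx.1, hx.2⟩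
  obtain ⟨C, hC, hest⟩ := exists_abs_integral_p0Integrand_sub_integral_modelIntegrand_le ha ht hm
    hδ hδa hK hc hQc hQδ fun x hx => hcQ x (Ioo_subset_Icc_self hx)
  intro s₀
  refine ⟨C * exp (-s₀) / (2 * π), 1, by positivity, fun n hn s hs => ?_⟩
  have hn0 : (0 : ℝ) < n := by exact_mod_cast hn
  have hmodel : (a ^ (-(1 : ℝ) / 2) * t ^ (-(1 / (2 * (m : ℝ)))) / (2 * π * m) *
      Fbeta (1 / (2 * (m : ℝ)) - 1) s) / n =
      1 / (2 * π) * ∫ x in Ioi 0, modelIntegrand a t m ((n : ℝ) ^ (2 * m)) s x := by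
    rw [integral_modelIntegrand ha ht (by positivity) hm s, mul_rpow ht.le (by positivity),
      pow_two_mul_rpow_neg_div hn0 hm, rpow_one]
    field_simp
  rw [hmodel, ← mul_sub, abs_mul, abs_of_pos (by positivity)]
  calc _ ≤ 1 / (2 * π) * (C * exp (-s) * ((n : ℝ) ^ (2 * m)) ^ (-(3 / (2 * m : ℝ)))) :=
        mul_le_mul_of_nonneg_left (hest _ (one_le_pow₀ (by exact_mod_cast hn)) s) (by positivity)
    _ ≤ 1 / (2 * π) * (C * exp (-s₀) * ((n : ℝ) ^ (3 : ℝ))⁻¹) := by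
      rw [pow_two_mul_rpow_neg_div hn0 hm]; gcongr
    _ = C * exp (-s₀) / (2 * π) / (n : ℝ) ^ 3 := by
      rw [show (3 : ℝ) = ((3 : ℕ) : ℝ) by norm_num, rpow_natCast]; ring
end
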